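/- arXiv:2302.02193 — 8 statements merged into one kernel-verified Lean document; each statement's English description precedes it below -/
import Mathlib

section
/- Suppose A ∈ ℝ^{m×n} admits x̂ with A x̂ < 0, and let H := sup over y with ‖y‖ ≤ 1 of the minimum of ‖x‖ over x with A x ≤ y. Then for every u ∈ ℝⁿ with A u ≰ 0, dist(u, P) ≤ H · ‖(A u)⁺‖, where P = {x : A x ≤ 0}; that is, H₀(A) ≤ H. -/
/-!
Write `v = (A u)⁺` and `t = ‖v‖ > 0`. The point `y₀ = -v / t` lies in the unit ball, and for every
`x` with `A x ≤ y₀` the point `u + t x` lies in `P`, at distance `t ‖x‖` from `u`; hence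
`dist(u, P) ≤ t · inf {‖x‖ : A x ≤ y₀} ≤ t H`. The Slater point makes `H` finite: compatibility
bounds the coordinates of the unit ball from below, so one multiple of `x̂` solves `A x ≤ y` for
every `y` in the unit ball.
-/

open Filter Matrix

section

variable {m n : Type*} [Fintype n]

/-- `inf {nn x : A x ≤ y}`; since `sInf ∅ = 0`, this is `0` when `A x ≤ y` has no solution. -/
noncomputable def minSolNorm (A : Matrix m n ℝ) (nn : Seminorm ℝ (n → ℝ)) (y : m → ℝ) : ℝ :=
  sInf {s | ∃ x, (∀ i, (A *ᵥ x) i ≤ y i) ∧ s = nn x}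

theorem minSolNorm_le {A : Matrix m n ℝ} (nn : Seminorm ℝ (n → ℝ)) {x : n → ℝ} {y : m → ℝ}
    (hx : ∀ i, (A *ᵥ x) i ≤ y i) : minSolNorm A nn y ≤ nn x :=
  csInf_le ⟨0, by rintro s ⟨x, -, rfl⟩; exact apply_nonneg nn x⟩ ⟨x, hx, rfl⟩

theorem exists_smul_mulVec_le [Finite m] {A : Matrix m n ℝ} {xhat : n → ℝ}
    (hxhat : ∀ i, (A *ᵥ xhat) i < 0) (b : m → ℝ) : ∃ s : ℝ, ∀ i, (A *ᵥ (s • xhat)) i ≤ b i := by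
  have h : ∀ᶠ s : ℝ in atTop, ∀ i, s * (A *ᵥ xhat) i ≤ b i := eventually_all.2 fun i =>
    (tendsto_id.atTop_mul_const_of_neg (hxhat i)).eventually_le_atBot (b i)
  obtain ⟨s, hs⟩ := h.exists
  exact ⟨s, fun i => by simpa [mulVec_smul] using hs i⟩

theorem sInf_dist_cone_le_mul_minSolNorm {A : Matrix m n ℝ} (nn : Seminorm ℝ (n → ℝ))
    {u : n → ℝ} {y : m → ℝ} {t : ℝ} (ht : 0 ≤ t) (hy : ∀ i, (A *ᵥ u) i + t * y i ≤ 0)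
    {x₀ : n → ℝ} (hx₀ : ∀ i, (A *ᵥ x₀) i ≤ y i) :
    sInf {r | ∃ x, (∀ i, (A *ᵥ x) i ≤ 0) ∧ r = nn (u - x)} ≤ t * minSolNorm A nn y := by
  rw [minSolNorm, ← smul_eq_mul, ← Real.sInf_smul_of_nonneg ht]
  refine le_csInf ⟨t • nn x₀, Set.smul_mem_smul_set ⟨x₀, hx₀, rfl⟩⟩ ?_
  rintro _ ⟨_, ⟨x, hx, rfl⟩, rfl⟩
  have hmem : ∀ i, (A *ᵥ (u + t • x)) i ≤ 0 := fun i => by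
    simp only [mulVec_add, mulVec_smul, Pi.add_apply, Pi.smul_apply, smul_eq_mul]
    linarith [mul_le_mul_of_nonneg_left (hx i) ht, hy i]
  calc sInf {r | ∃ x, (∀ i, (A *ᵥ x) i ≤ 0) ∧ r = nn (u - x)}
      ≤ nn (u - (u + t • x)) :=
        csInf_le ⟨0, by rintro r ⟨x, -, rfl⟩; exact apply_nonneg nn _⟩ ⟨_, hmem, rfl⟩
    _ = t • nn x := by
        rw [sub_add_cancel_left, map_neg_eq_map, map_smul_eq_mul, Real.norm_of_nonneg ht,
          smul_eq_mul]

end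

section

variable {m : Type*} [DecidableEq m] {nm : Seminorm ℝ (m → ℝ)}

theorem abs_apply_mul_le_of_compat
    (hcompat : ∀ y z : m → ℝ, (∀ i, |y i| ≤ |z i|) → nm y ≤ nm z) (y : m → ℝ) (i : m) :
    |y i| * nm (Pi.single i 1) ≤ nm y := by
  have h : nm (Pi.single i (y i)) ≤ nm y := hcompat _ _ fun j => by
    rcases eq_or_ne j i with rfl | hj
    · simp
    · simp [hj]
  have hsingle : Pi.single i (y i) = y i • (Pi.single i 1 : m → ℝ) := by
    rw [← Pi.single_smul', smul_eq_mul, mul_one]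
  rwa [hsingle, map_smul_eq_mul, Real.norm_eq_abs] at h

theorem exists_mulVec_le_of_seminorm_le_one [Finite m] {n : Type*} [Fintype n]
    (hnm : ∀ y, nm y = 0 → y = 0)
    (hcompat : ∀ y z : m → ℝ, (∀ i, |y i| ≤ |z i|) → nm y ≤ nm z)
    {A : Matrix m n ℝ} {xhat : n → ℝ} (hxhat : ∀ i, (A *ᵥ xhat) i < 0) :
    ∃ x₀, ∀ y, nm y ≤ 1 → ∀ i, (A *ᵥ x₀) i ≤ y i := by
  obtain ⟨s, hs⟩ := exists_smul_mulVec_le hxhat fun i => -(nm (Pi.single i 1))⁻¹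
  refine ⟨s • xhat, fun y hy i => (hs i).trans ?_⟩
  have hpos : 0 < nm (Pi.single i (1 : ℝ)) :=
    (apply_nonneg nm _).lt_of_ne fun h => by simpa using congrFun (hnm _ h.symm) i
  have hyi : |y i| ≤ (nm (Pi.single i 1))⁻¹ := by
    rw [← one_div, le_div_iff₀ hpos]
    exact (abs_apply_mul_le_of_compat hcompat y i).trans hy
  linarith [neg_abs_le (y i)]

end

theorem stmt3_general {m n : ℕ} (A : Matrix (Fin m) (Fin n) ℝ)
    (nn : Seminorm ℝ (Fin n → ℝ)) (nm : Seminorm ℝ (Fin m → ℝ))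
    (hnm : ∀ y, nm y = 0 → y = 0)
    (hcompat : ∀ y z : Fin m → ℝ, (∀ i, |y i| ≤ |z i|) → nm y ≤ nm z)
    (xhat : Fin n → ℝ) (hxhat : ∀ i, A.mulVec xhat i < 0) :
    ∀ u : Fin n → ℝ, (¬ ∀ i, A.mulVec u i ≤ 0) →
      sInf {r | ∃ x, (∀ i, A.mulVec x i ≤ 0) ∧ r = nn (u - x)} ≤
        (sSup {r | ∃ y : Fin m → ℝ, nm y ≤ 1 ∧
            r = sInf {s | ∃ x, (∀ i, A.mulVec x i ≤ y i) ∧ s = nn x}}) *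
          nm (fun i => max (A.mulVec u i) 0) := by
  intro u hu
  set v : Fin m → ℝ := fun i => max ((A *ᵥ u) i) 0
  have hv : 0 < nm v := (apply_nonneg nm v).lt_of_ne fun h => hu fun i =>
    (le_max_left _ _).trans_eq (congrFun (hnm v h.symm) i)
  set y₀ : Fin m → ℝ := -(nm v)⁻¹ • v
  have hy₀ : nm y₀ ≤ 1 := by
    rw [map_smul_eq_mul, norm_neg, norm_inv, Real.norm_of_nonneg hv.le, inv_mul_cancel₀ hv.ne']
  obtain ⟨x₀, hx₀⟩ := exists_mulVec_le_of_seminorm_le_one hnm hcompat hxhat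
  have hbdd : BddAbove {r | ∃ y : Fin m → ℝ, nm y ≤ 1 ∧ r = minSolNorm A nn y} :=
    ⟨nn x₀, by rintro _ ⟨y, hy, rfl⟩; exact minSolNorm_le nn (hx₀ y hy)⟩
  have hAu : ∀ i, (A *ᵥ u) i + nm v * y₀ i ≤ 0 := fun i => by
    simp only [y₀, Pi.smul_apply, smul_eq_mul, neg_mul, mul_neg, ← mul_assoc,
      mul_inv_cancel₀ hv.ne', one_mul]
    linarith [le_max_left ((A *ᵥ u) i) 0]
  calc _ ≤ nm v * minSolNorm A nn y₀ :=
        sInf_dist_cone_le_mul_minSolNorm nn hv.le hAu (hx₀ y₀ hy₀)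
    _ ≤ nm v * sSup {r | ∃ y : Fin m → ℝ, nm y ≤ 1 ∧ r = minSolNorm A nn y} := by
        gcongr; exact le_csSup hbdd ⟨y₀, hy₀, rfl⟩
    _ = _ := mul_comm _ _

/-- Proposition 1 (pointwise form): if `A xhat < 0` for some `xhat`, then for every
`u ∉ P = {x : A x ≤ 0}`, `dist(u,P) ≤ H ⬝ ‖(A u)⁺‖` where
`H = sup_{‖y‖ ≤ 1} inf_{A x ≤ y} ‖x‖`; i.e. `H₀(A) ≤ H`. Norms are given by
seminorms `nn`, `nm` that are definite (hence norms), with `nm` componentwise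
compatible. -/
theorem stmt3 {m n : ℕ} (A : Matrix (Fin m) (Fin n) ℝ)
    (nn : Seminorm ℝ (Fin n → ℝ)) (nm : Seminorm ℝ (Fin m → ℝ))
    (hnn : ∀ x, nn x = 0 → x = 0) (hnm : ∀ y, nm y = 0 → y = 0)
    (hcompat : ∀ y z : Fin m → ℝ, (∀ i, |y i| ≤ |z i|) → nm y ≤ nm z)
    (xhat : Fin n → ℝ) (hxhat : ∀ i, A.mulVec xhat i < 0) :
    ∀ u : Fin n → ℝ, (¬ ∀ i, A.mulVec u i ≤ 0) →
      sInf {r | ∃ x, (∀ i, A.mulVec x i ≤ 0) ∧ r = nn (u - x)} ≤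
        (sSup {r | ∃ y : Fin m → ℝ, nm y ≤ 1 ∧
            r = sInf {s | ∃ x, (∀ i, A.mulVec x i ≤ y i) ∧ s = nn x}}) *
          nm (fun i => max (A.mulVec u i) 0) :=
  stmt3_general A nn nm hnm hcompat xhat hxhat
end

section
/- Suppose A ∈ ℝ^{m×n} admits x̂ with A x̂ < 0 componentwise. Then the quantity H := sup_{‖y‖≤1} min_{x : A x ≤ y} ‖x‖ is finite. -/
/-!
A seminorm with trivial kernel on `ℝᵐ` dominates a multiple of the sup norm, so every `y` in its
unit ball satisfies `y ≥ -R` componentwise for a fixed `R`. Since `A x̂ < 0`, some multiple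
`t • x̂` has `A (t • x̂) ≤ -R`, hence is feasible for every such `y`, and `nn (t • x̂)` bounds all
the inner infima.
-/

open Filter

theorem Seminorm.exists_pos_mul_norm_le {E : Type*} [NormedAddCommGroup E] [NormedSpace ℝ E]
    [FiniteDimensional ℝ E] (p : Seminorm ℝ E) (hp : ∀ x, p x = 0 → x = 0) :
    ∃ ε > 0, ∀ x, ε * ‖x‖ ≤ p x := by
  cases subsingleton_or_nontrivial E with
  | inl _ => exact ⟨1, one_pos, fun x => by simp [Subsingleton.elim x 0]⟩
  | inr _ =>
    obtain ⟨x₀, hx₀, hmin⟩ := (isCompact_sphere (0 : E) 1).exists_isMinOn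
      (NormedSpace.sphere_nonempty.mpr zero_le_one)
      p.convexOn.locallyLipschitz.continuous.continuousOn
    have hx₀ne : x₀ ≠ 0 := ne_zero_of_mem_unit_sphere ⟨x₀, hx₀⟩
    refine ⟨p x₀, (apply_nonneg p x₀).lt_of_ne' (mt (hp x₀) hx₀ne), fun x => ?_⟩
    rcases eq_or_ne x 0 with rfl | hx
    · simp
    have hnorm : 0 < ‖x‖ := norm_pos_iff.mpr hx
    have hunit : ‖x‖⁻¹ • x ∈ Metric.sphere (0 : E) 1 := by
      simp [norm_smul, hnorm.ne']
    calc p x₀ * ‖x‖ ≤ p (‖x‖⁻¹ • x) * ‖x‖ := by gcongr; exact hmin hunit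
      _ = p x := by
        rw [map_smul_eq_mul, norm_inv, norm_norm]; field_simp

theorem Matrix.eventually_mulVec_smul_le {ι κ : Type*} [Finite ι] [Fintype κ]
    (A : Matrix ι κ ℝ) {v : κ → ℝ} (hv : ∀ i, A.mulVec v i < 0) (c : ℝ) :
    ∀ᶠ t : ℝ in atTop, ∀ i, A.mulVec (t • v) i ≤ c := by
  simp only [Matrix.mulVec_smul, Pi.smul_apply, smul_eq_mul]
  exact eventually_all.2 fun i =>
    (tendsto_id.atTop_mul_const_of_neg (hv i)).eventually (eventually_le_atBot c)

theorem stmt4_general {m n : ℕ} (A : Matrix (Fin m) (Fin n) ℝ)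
    (nn : Seminorm ℝ (Fin n → ℝ)) (nm : Seminorm ℝ (Fin m → ℝ))
    (hnm : ∀ y, nm y = 0 → y = 0)
    (xhat : Fin n → ℝ) (hxhat : ∀ i, A.mulVec xhat i < 0) :
    {r | ∃ y : Fin m → ℝ, nm y ≤ 1 ∧
        r = sInf {s | ∃ x, (∀ i, A.mulVec x i ≤ y i) ∧ s = nn x}}.Nonempty ∧
    BddAbove {r | ∃ y : Fin m → ℝ, nm y ≤ 1 ∧
        r = sInf {s | ∃ x, (∀ i, A.mulVec x i ≤ y i) ∧ s = nn x}} := by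
  refine ⟨⟨_, 0, by simp, rfl⟩, ?_⟩
  obtain ⟨ε, hε, hlow⟩ := nm.exists_pos_mul_norm_le hnm
  obtain ⟨t, ht⟩ := (Matrix.eventually_mulVec_smul_le A hxhat (-ε⁻¹)).exists
  refine ⟨nn (t • xhat), ?_⟩
  rintro _ ⟨y, hy, rfl⟩
  have hynorm : ‖y‖ ≤ ε⁻¹ := by
    rw [← one_div, le_div_iff₀' hε]; linarith [hlow y]
  have hfeasible : ∀ i, A.mulVec (t • xhat) i ≤ y i := fun i =>
    (ht i).trans (neg_le_of_abs_le ((norm_le_pi_norm y i).trans hynorm))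
  exact csInf_le ⟨0, fun _ ⟨x, _, hs⟩ => hs ▸ apply_nonneg nn x⟩ ⟨t • xhat, hfeasible, rfl⟩

/-- If `A xhat < 0` for some `xhat`, then `H = sup_{‖y‖ ≤ 1} inf_{A x ≤ y} ‖x‖`
is finite, i.e. the set of inner minimum values is nonempty and bounded above. -/
theorem stmt4 {m n : ℕ} (A : Matrix (Fin m) (Fin n) ℝ)
    (nn : Seminorm ℝ (Fin n → ℝ)) (nm : Seminorm ℝ (Fin m → ℝ))
    (hnn : ∀ x, nn x = 0 → x = 0) (hnm : ∀ y, nm y = 0 → y = 0)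
    (xhat : Fin n → ℝ) (hxhat : ∀ i, A.mulVec xhat i < 0) :
    {r | ∃ y : Fin m → ℝ, nm y ≤ 1 ∧
        r = sInf {s | ∃ x, (∀ i, A.mulVec x i ≤ y i) ∧ s = nn x}}.Nonempty ∧
    BddAbove {r | ∃ y : Fin m → ℝ, nm y ≤ 1 ∧
        r = sInf {s | ∃ x, (∀ i, A.mulVec x i ≤ y i) ∧ s = nn x}} :=
  stmt4_general A nn nm hnm xhat hxhat
end

section
/- Suppose ℝ^m is endowed with the ℓ∞ norm, A ∈ ℝ^{m×n}, and x̄ ∈ ℝⁿ satisfies A x̄ ≥ 𝟏 (the all-ones vector). Then H₀(-A) ≤ ‖x̄‖, i.e., for every u ∈ ℝⁿ with -A u ≰ 0, dist(u, {x : -A x ≤ 0}) ≤ ‖x̄‖ · ‖(-A u)⁺‖∞. -/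
/-- If `A xbar ≥ 𝟏` then `H₀(-A) ≤ ‖xbar‖`: for every `u` with `-A u ≰ 0`,
`dist(u, {x : -A x ≤ 0}) ≤ ‖xbar‖ ⬝ ‖(-A u)⁺‖∞`. Here `ℝⁿ` carries a norm `nn`
(a definite seminorm) and `ℝᵐ` the `ℓ∞` norm. -/
theorem stmt5 {m n : ℕ} (A : Matrix (Fin m) (Fin n) ℝ)
    (nn : Seminorm ℝ (Fin n → ℝ)) (hnn : ∀ x, nn x = 0 → x = 0)
    (xbar : Fin n → ℝ) (hxbar : ∀ i, 1 ≤ A.mulVec xbar i) :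
    ∀ u : Fin n → ℝ, (¬ ∀ i, (-A).mulVec u i ≤ 0) →
      sInf {r | ∃ x, (∀ i, (-A).mulVec x i ≤ 0) ∧ r = nn (u - x)} ≤
        nn xbar * ‖(fun i => max ((-A).mulVec u i) 0 : Fin m → ℝ)‖ := by
  intro u _
  set f : Fin m → ℝ := fun i => max ((-A).mulVec u i) 0 with hf
  set t : ℝ := ‖f‖ with ht
  have ht0 : 0 ≤ t := norm_nonneg f
  have hft : ∀ i, f i ≤ t := fun i => by
    calc f i ≤ |f i| := le_abs_self _
    _ = ‖f i‖ := rfl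
    _ ≤ ‖f‖ := norm_le_pi_norm f i
  set x : Fin n → ℝ := u + t • xbar with hx
  have hxfeas : ∀ i, (-A).mulVec x i ≤ 0 := by
    intro i
    have : (-A).mulVec x i = (-A).mulVec u i + t * (-A).mulVec xbar i := by
      simp [hx, Matrix.mulVec_add, Matrix.mulVec_smul]
    rw [this]
    have h1 : (-A).mulVec xbar i = -(A.mulVec xbar i) := by
      simp [Matrix.neg_mulVec]
    have h2 : (-A).mulVec u i ≤ f i := le_max_left _ _
    have h3 : t * (-A).mulVec xbar i ≤ t * (-1) := by
      rw [h1]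
      exact mul_le_mul_of_nonneg_left (by linarith [hxbar i]) ht0
    have := hft i
    nlinarith
  have hmem : t * nn xbar ∈ {r | ∃ x, (∀ i, (-A).mulVec x i ≤ 0) ∧ r = nn (u - x)} := by
    refine ⟨x, hxfeas, ?_⟩
    have : u - x = -(t • xbar) := by
      simp [hx]
    rw [this, map_neg_eq_map, map_smul_eq_mul, Real.norm_eq_abs, abs_of_nonneg ht0]
  have hbdd : BddBelow {r | ∃ x, (∀ i, (-A).mulVec x i ≤ 0) ∧ r = nn (u - x)} := by
    refine ⟨0, fun r hr => ?_⟩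
    obtain ⟨y, _, rfl⟩ := hr
    exact apply_nonneg nn _
  calc sInf {r | ∃ x, (∀ i, (-A).mulVec x i ≤ 0) ∧ r = nn (u - x)} ≤ t * nn xbar :=
        csInf_le hbdd hmem
    _ = nn xbar * t := mul_comm _ _
end

section
/- Let A ∈ ℝ^{m×n}, ȳ ∈ ℝ^m with ȳ > 0 componentwise, 𝟏ᵀ ȳ = 1, and Aᵀ ȳ = 0. Let Ȳ = Diag(ȳ) and let σ⁺min denote the smallest positive singular value of Aᵀ Ȳ. Then every v ∈ Aᵀ(ℝ^m) with ‖v‖₂ ≤ σ⁺min/2 belongs to the set {Aᵀ y : y ∈ ℝ^m₊, 𝟏ᵀ y ≤ 1}. -/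
/-!
Write `v = Aᵀ w = M x` with `M = Aᵀ Ȳ` and `x = Ȳ⁻¹ w`. Since `M` and `M Mᵀ` have the same range,
`v = M a` for some `a` in the row space of `M`, where `M` is bounded below by `σ⁺min`; hence
`‖a‖₂ ≤ 1/2`, so every `|aᵢ| ≤ 1/2`. The vector `y = Ȳ (𝟏/2 + a)` is then nonnegative, has
`𝟏ᵀ y ≤ 𝟏ᵀ ȳ = 1`, and `Aᵀ y = Aᵀ ȳ / 2 + M a = v`.
-/

/-- The Euclidean (ℓ₂) norm on `Fin k → ℝ`. -/
noncomputable def e2norm {k : ℕ} (v : Fin k → ℝ) : ℝ := Real.sqrt (∑ i, v i ^ 2)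

/-- The smallest positive singular value of `M`, characterized as the infimum of
`‖M v‖₂` over unit vectors `v` in the row space `range(Mᵀ)` of `M`. -/
noncomputable def sigmaMinPos {p q : ℕ} (M : Matrix (Fin p) (Fin q) ℝ) : ℝ :=
  sInf {r | ∃ v : Fin q → ℝ, (∃ w, M.transpose.mulVec w = v) ∧ e2norm v = 1 ∧
    r = e2norm (M.mulVec v)}

open Matrix

namespace Matrix

variable {m n R : Type*} [Fintype m] [Fintype n]
  [Field R] [LinearOrder R] [IsStrictOrderedRing R]

theorem range_mulVecLin_self_mul_transpose (A : Matrix m n R) :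
    LinearMap.range (A * Aᵀ).mulVecLin = LinearMap.range A.mulVecLin := by
  refine Submodule.eq_of_le_of_finrank_eq ?_ ?_
  · rw [mulVecLin_mul]
    exact LinearMap.range_comp_le_range _ _
  · simpa only [rank] using rank_self_mul_transpose A

theorem exists_mulVec_transpose_mulVec_eq (A : Matrix m n R) (x : n → R) :
    ∃ c, A *ᵥ (Aᵀ *ᵥ c) = A *ᵥ x := by
  have hx : A *ᵥ x ∈ LinearMap.range (A * Aᵀ).mulVecLin := by
    rw [range_mulVecLin_self_mul_transpose]
    exact ⟨x, rfl⟩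
  obtain ⟨c, hc⟩ := hx
  exact ⟨c, by rw [mulVec_mulVec]; exact hc⟩

end Matrix

section e2norm

variable {k : ℕ}

theorem e2norm_eq_norm_toLp (v : Fin k → ℝ) : e2norm v = ‖WithLp.toLp 2 v‖ := by
  simp [e2norm, EuclideanSpace.norm_eq, Real.norm_eq_abs, sq_abs]

theorem e2norm_smul (c : ℝ) (v : Fin k → ℝ) : e2norm (c • v) = |c| * e2norm v := by
  simp only [e2norm_eq_norm_toLp, WithLp.toLp_smul, norm_smul, Real.norm_eq_abs]

theorem e2norm_pos {v : Fin k → ℝ} (hv : v ≠ 0) : 0 < e2norm v := by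
  rw [e2norm_eq_norm_toLp, norm_pos_iff]
  exact (WithLp.toLp_eq_zero 2).not.mpr hv

theorem abs_le_e2norm (v : Fin k → ℝ) (i : Fin k) : |v i| ≤ e2norm v := by
  rw [e2norm_eq_norm_toLp, ← Real.norm_eq_abs]
  exact PiLp.norm_apply_le (WithLp.toLp 2 v) i

end e2norm

theorem sigmaMinPos_mul_e2norm_le {p q : ℕ} (M : Matrix (Fin p) (Fin q) ℝ) {u : Fin q → ℝ}
    (hu : ∃ w, Mᵀ *ᵥ w = u) : sigmaMinPos M * e2norm u ≤ e2norm (M *ᵥ u) := by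
  rcases eq_or_ne u 0 with rfl | hu0
  · simp [e2norm]
  have hpos := e2norm_pos hu0
  set c := (e2norm u)⁻¹
  have hc : 0 < c := inv_pos.mpr hpos
  have hle : sigmaMinPos M ≤ e2norm (M *ᵥ (c • u)) := by
    refine csInf_le ⟨0, ?_⟩ ⟨c • u, ?_, ?_, rfl⟩
    · rintro r ⟨v, -, -, rfl⟩
      exact Real.sqrt_nonneg _
    · obtain ⟨w, rfl⟩ := hu
      exact ⟨c • w, mulVec_smul _ _ _⟩
    · rw [e2norm_smul, abs_of_pos hc, inv_mul_cancel₀ hpos.ne']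
  rwa [mulVec_smul, e2norm_smul, abs_of_pos hc, inv_mul_eq_div, le_div_iff₀ hpos] at hle

theorem abs_le_half_of_e2norm_mulVec_le {p q : ℕ} (M : Matrix (Fin p) (Fin q) ℝ)
    {a : Fin q → ℝ} (ha : ∃ c, Mᵀ *ᵥ c = a) (hMa : M *ᵥ a ≠ 0)
    (hle : e2norm (M *ᵥ a) ≤ sigmaMinPos M / 2) (i : Fin q) : |a i| ≤ 1 / 2 := by
  have hbound := sigmaMinPos_mul_e2norm_le M ha
  have hσ : 0 < sigmaMinPos M := by linarith [e2norm_pos hMa]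
  have hnorm : e2norm a ≤ 1 / 2 := le_of_mul_le_mul_left (by linarith) hσ
  exact (abs_le_e2norm a i).trans hnorm

theorem exists_nonneg_sum_le_one_mulVec_eq {ι κ : Type*} [Fintype ι] [DecidableEq ι]
    (B : Matrix κ ι ℝ) {ybar : ι → ℝ} (hnonneg : ∀ i, 0 ≤ ybar i) (hsum : ∑ i, ybar i = 1)
    (hker : B *ᵥ ybar = 0) {a : ι → ℝ} (ha : ∀ i, |a i| ≤ 1 / 2) :
    ∃ y : ι → ℝ, (∀ i, 0 ≤ y i) ∧ ∑ i, y i ≤ 1 ∧ B *ᵥ y = (B * diagonal ybar) *ᵥ a := by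
  refine ⟨fun i => ybar i * (1 / 2 + a i), fun i => ?_, ?_, ?_⟩
  · exact mul_nonneg (hnonneg i) (by linarith [neg_abs_le (a i), ha i])
  · calc ∑ i, ybar i * (1 / 2 + a i) ≤ ∑ i, ybar i := Finset.sum_le_sum fun i _ =>
          mul_le_of_le_one_right (hnonneg i) (by linarith [le_abs_self (a i), ha i])
      _ = 1 := hsum
  · have hy : (fun i => ybar i * (1 / 2 + a i)) = (1 / 2 : ℝ) • ybar + diagonal ybar *ᵥ a := by
      ext i
      simp only [Pi.add_apply, Pi.smul_apply, mulVec_diagonal, smul_eq_mul]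
      ring
    rw [hy, mulVec_add, mulVec_smul, hker, smul_zero, zero_add, mulVec_mulVec]

/-- If `ybar > 0`, `𝟏ᵀ ybar = 1`, `Aᵀ ybar = 0`, and `Ybar = Diag(ybar)`, then
every `v ∈ Aᵀ(ℝᵐ)` with `‖v‖₂ ≤ σ⁺min(Aᵀ Ybar)/2` lies in
`{Aᵀ y : y ≥ 0, 𝟏ᵀ y ≤ 1}`. -/
theorem stmt8 {m n : ℕ} (A : Matrix (Fin m) (Fin n) ℝ)
    (ybar : Fin m → ℝ) (hpos : ∀ i, 0 < ybar i) (hsum : ∑ i, ybar i = 1)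
    (hker : A.transpose.mulVec ybar = 0) :
    ∀ v : Fin n → ℝ, (∃ w, A.transpose.mulVec w = v) →
      e2norm v ≤ sigmaMinPos (A.transpose * Matrix.diagonal ybar) / 2 →
      ∃ y : Fin m → ℝ, (∀ i, 0 ≤ y i) ∧ (∑ i, y i) ≤ 1 ∧
        A.transpose.mulVec y = v := by
  rintro v ⟨w, rfl⟩ hle
  rcases eq_or_ne (Aᵀ *ᵥ w) 0 with hv0 | hv0
  · exact ⟨0, fun _ => le_rfl, by simp, by rw [hv0, mulVec_zero]⟩
  set M := Aᵀ * diagonal ybar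
  have hMx : M *ᵥ (fun i => w i / ybar i) = Aᵀ *ᵥ w := by
    rw [← mulVec_mulVec]
    congr 1
    ext i
    rw [mulVec_diagonal]
    exact mul_div_cancel₀ _ (hpos i).ne'
  obtain ⟨c, hc⟩ := exists_mulVec_transpose_mulVec_eq M (fun i => w i / ybar i)
  rw [← hc] at hMx
  have ha := abs_le_half_of_e2norm_mulVec_le M ⟨c, rfl⟩ (hMx ▸ hv0) (hMx ▸ hle)
  obtain ⟨y, hy0, hy1, hy⟩ :=
    exists_nonneg_sum_le_one_mulVec_eq Aᵀ (fun i => (hpos i).le) hsum hker ha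
  exact ⟨y, hy0, hy1, hy.trans hMx⟩
end

section
/- For every A ∈ ℝ^{m×n} there exists a unique partition B ∪ N = {1,…,m}, B ∩ N = ∅, such that: (i) there exists x̂ ∈ ℝⁿ with A_B x̂ = 0 and A_N x̂ < 0 componentwise, and (ii) there exists ŷ_B > 0 componentwise with A_Bᵀ ŷ_B = 0. -/
/-!
Farkas' lemma gives, for each row `i`, either `y ≥ 0` with `Aᵀ y = 0` and `y i > 0`, or `x` with
`A x ≤ 0` and `(A x) i < 0`. Summing one such certificate per row yields a strictly complementary
pair `(x, y)`, and `B` is the support of `y`. Complementary slackness, `y k * (A x) k = 0` because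
`y ⬝ᵥ A x = Aᵀ y ⬝ᵥ x = 0` is a sum of nonpositive terms, shows that any two valid partitions
coincide.
-/

open Matrix Finset

lemma exists_nonneg_sum_insert {ι R M : Type*} [DecidableEq ι] [Semiring R] [PartialOrder R]
    [AddCommMonoid M] [Module R M] {s : Finset ι} {k : ι} (hk : k ∉ s) {c : ι → R}
    (hc : ∀ i ∈ s, 0 ≤ c i) {μ : R} (hμ : 0 ≤ μ) (a : ι → M) :
    ∃ c' : ι → R, (∀ i ∈ insert k s, 0 ≤ c' i) ∧
      ∑ i ∈ insert k s, c' i • a i = μ • a k + ∑ i ∈ s, c i • a i := by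
  refine ⟨Function.update c k μ, (forall_mem_insert _ _ _).2 ⟨by simpa, fun i hi => ?_⟩, ?_⟩
  · rw [Function.update_of_ne (ne_of_mem_of_not_mem hi hk)]
    exact hc i hi
  · rw [sum_insert hk, Function.update_self]
    congr 1
    exact sum_congr rfl fun i hi => by rw [Function.update_of_ne (ne_of_mem_of_not_mem hi hk)]

variable {𝕜 n : Type*} [Field 𝕜] [Fintype n]

/-- The projection onto `xᗮ` along `v` (when `v ⬝ᵥ x ≠ 0`). -/
def projAlong (v x : n → 𝕜) : (n → 𝕜) →ₗ[𝕜] n → 𝕜 where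
  toFun w := w - (w ⬝ᵥ x / v ⬝ᵥ x) • v
  map_add' u w := by
    simp only [add_dotProduct, add_div, add_smul]
    abel
  map_smul' c w := by
    simp only [smul_dotProduct, smul_eq_mul, mul_div_assoc, mul_smul, smul_sub, RingHom.id_apply]

variable {v x : n → 𝕜}

lemma projAlong_apply (w : n → 𝕜) : projAlong v x w = w - (w ⬝ᵥ x / v ⬝ᵥ x) • v := rfl

lemma projAlong_self (h : v ⬝ᵥ x ≠ 0) : projAlong v x v = 0 := by
  simp [projAlong_apply, h]

lemma projAlong_dotProduct (w z : n → 𝕜) :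
    projAlong v x w ⬝ᵥ z = w ⬝ᵥ (z - (v ⬝ᵥ z / v ⬝ᵥ x) • x) := by
  simp only [projAlong_apply, sub_dotProduct, dotProduct_sub, smul_dotProduct, dotProduct_smul,
    smul_eq_mul, dotProduct_comm v z]
  ring

lemma eq_smul_of_projAlong_eq_zero {w : n → 𝕜} (h : projAlong v x w = 0) :
    w = (w ⬝ᵥ x / v ⬝ᵥ x) • v :=
  sub_eq_zero.1 h

variable [LinearOrder 𝕜] [IsStrictOrderedRing 𝕜]

theorem farkas {ι : Type*} (s : Finset ι) (a : ι → n → 𝕜) (b : n → 𝕜) :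
    (∃ c : ι → 𝕜, (∀ i ∈ s, 0 ≤ c i) ∧ ∑ i ∈ s, c i • a i = b) ∨
      ∃ x, (∀ i ∈ s, a i ⬝ᵥ x ≤ 0) ∧ 0 < b ⬝ᵥ x := by
  classical
  induction s using Finset.induction_on generalizing a b with
  | empty =>
    by_cases hb : b = 0
    · exact Or.inl ⟨0, by simp, by simp [hb]⟩
    · exact Or.inr ⟨b, by simp, (Ne.symm (dotProduct_self_eq_zero.not.2 hb)).lt_of_le
        (Fintype.sum_nonneg fun i => mul_self_nonneg (b i))⟩
  | insert k s hk ih =>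
    obtain ⟨c, hc, hcb⟩ | ⟨x, hx, hbx⟩ := ih a b
    · obtain ⟨c', hc', hc'b⟩ := exists_nonneg_sum_insert hk hc le_rfl a
      exact Or.inl ⟨c', hc', by rw [hc'b, zero_smul, zero_add, hcb]⟩
    obtain hkx | hkx := le_or_gt (a k ⬝ᵥ x) 0
    · exact Or.inr ⟨x, (forall_mem_insert _ _ _).2 ⟨hkx, hx⟩, hbx⟩
    -- Otherwise project along `a k` onto `xᗮ`, which kills `a k`, and recurse.
    set π := projAlong (a k) x
    obtain ⟨c, hc, hcb⟩ | ⟨z, hz, hbz⟩ := ih (fun i => π (a i)) (π b)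
    · set r := b - ∑ i ∈ s, c i • a i
      have hπr : π r = 0 := by
        simp only [r, map_sub, map_sum, map_smul, hcb, sub_self]
      have hrx : 0 < r ⬝ᵥ x := by
        have : ∑ i ∈ s, c i * (a i ⬝ᵥ x) ≤ 0 :=
          sum_nonpos fun i hi => mul_nonpos_of_nonneg_of_nonpos (hc i hi) (hx i hi)
        simp only [r, sub_dotProduct, sum_dotProduct, smul_dotProduct, smul_eq_mul]
        linarith
      obtain ⟨c', hc', hc'b⟩ := exists_nonneg_sum_insert hk hc (div_pos hrx hkx).le a
      refine Or.inl ⟨c', hc', ?_⟩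
      rw [hc'b, ← eq_smul_of_projAlong_eq_zero hπr, sub_add_cancel]
    · refine Or.inr ⟨z - (a k ⬝ᵥ z / a k ⬝ᵥ x) • x,
        (forall_mem_insert _ _ _).2 ⟨?_, fun i hi => ?_⟩, ?_⟩
      · rw [← projAlong_dotProduct, projAlong_self hkx.ne', zero_dotProduct]
      · rw [← projAlong_dotProduct]; exact hz i hi
      · rwa [← projAlong_dotProduct]

variable {m : Type*} [Fintype m]

theorem complementary_slackness {A : Matrix m n 𝕜} {x : n → 𝕜} {y : m → 𝕜} (hx : A *ᵥ x ≤ 0)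
    (hy : 0 ≤ y) (hAy : Aᵀ *ᵥ y = 0) (k : m) : y k * (A *ᵥ x) k = 0 := by
  have hsum : ∑ j, y j * (A *ᵥ x) j = 0 := by
    rw [← dotProduct, dotProduct_mulVec, ← mulVec_transpose, hAy, zero_dotProduct]
  exact (sum_eq_zero_iff_of_nonpos fun j _ => mul_nonpos_of_nonneg_of_nonpos (hy j) (hx j)).1
    hsum k (mem_univ k)

theorem exists_dual_pos_or_exists_primal_neg (A : Matrix m n 𝕜) (i : m) :
    (∃ y, 0 ≤ y ∧ 0 < y i ∧ Aᵀ *ᵥ y = 0) ∨ ∃ x, A *ᵥ x ≤ 0 ∧ (A *ᵥ x) i < 0 := by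
  classical
  obtain ⟨c, hc, hcA⟩ | ⟨x, hx, hAx⟩ := farkas univ (fun j => A j) (-A i)
  · refine Or.inl ⟨c + Pi.single i 1,
      add_nonneg (fun j => hc j (mem_univ j)) (Pi.single_nonneg.2 zero_le_one), ?_, ?_⟩
    · simpa using add_pos_of_nonneg_of_pos (hc i (mem_univ i)) one_pos
    · rw [mulVec_transpose, add_vecMul, single_one_vecMul, vecMul_eq_sum, hcA, row,
        neg_add_cancel]
  · refine Or.inr ⟨x, fun j => hx j (mem_univ j), ?_⟩
    rw [neg_dotProduct] at hAx
    exact neg_pos.1 hAx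

theorem exists_strictly_complementary (A : Matrix m n 𝕜) :
    ∃ x y, A *ᵥ x ≤ 0 ∧ 0 ≤ y ∧ Aᵀ *ᵥ y = 0 ∧ ∀ k, 0 < y k ∨ (A *ᵥ x) k < 0 := by
  have : ∀ k, ∃ x y, A *ᵥ x ≤ 0 ∧ 0 ≤ y ∧ Aᵀ *ᵥ y = 0 ∧ (0 < y k ∨ (A *ᵥ x) k < 0) := by
    intro k
    obtain ⟨y, hy, hyk, hAy⟩ | ⟨x, hx, hxk⟩ := exists_dual_pos_or_exists_primal_neg A k
    · exact ⟨0, y, by simp, hy, hAy, Or.inl hyk⟩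
    · exact ⟨x, 0, hx, le_rfl, by simp, Or.inr hxk⟩
  choose x y hx hy hAy hxy using this
  refine ⟨∑ k, x k, ∑ k, y k, ?_, ?_, ?_, fun k => ?_⟩
  · rw [mulVec_sum]; exact sum_nonpos fun k _ => hx k
  · exact sum_nonneg fun k _ => hy k
  · rw [mulVec_sum]; exact sum_eq_zero fun k _ => hAy k
  · rw [mulVec_sum, Finset.sum_apply, Finset.sum_apply]
    refine (hxy k).imp (fun h => sum_pos' (fun j _ => hy j k) ⟨k, mem_univ k, h⟩)
      (fun h => sum_neg' (fun j _ => hx j k) ⟨k, mem_univ k, h⟩)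

variable [DecidableEq m]

def IsGoldmanTuckerPartition (A : Matrix m n 𝕜) (B N : Finset m) : Prop :=
  B ∪ N = univ ∧ B ∩ N = ∅ ∧
    (∃ x, (∀ i ∈ B, (A *ᵥ x) i = 0) ∧ ∀ i ∈ N, (A *ᵥ x) i < 0) ∧
    ∃ y, (∀ i ∈ B, 0 < y i) ∧ (∀ i ∉ B, y i = 0) ∧ Aᵀ *ᵥ y = 0

namespace IsGoldmanTuckerPartition

variable {A : Matrix m n 𝕜} {B N B' N' : Finset m}

omit [IsStrictOrderedRing 𝕜] in
theorem eq_compl (h : IsGoldmanTuckerPartition A B N) : N = Bᶜ :=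
  (IsCompl.of_eq h.2.1 h.1).compl_eq.symm

theorem subset (h : IsGoldmanTuckerPartition A B N) (h' : IsGoldmanTuckerPartition A B' N') :
    B ⊆ B' := by
  obtain ⟨-, -, -, y, hyB, hyN, hAy⟩ := h
  obtain ⟨x, hxB, hxN⟩ := h'.2.2.1
  have hN' := h'.eq_compl
  have hx : A *ᵥ x ≤ 0 := fun i => by
    by_cases hi : i ∈ B'
    · exact (hxB i hi).le
    · exact (hxN i (hN' ▸ mem_compl.2 hi)).le
  have hy : 0 ≤ y := fun i => by
    by_cases hi : i ∈ B
    · exact (hyB i hi).le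
    · exact (hyN i hi).ge
  intro k hk
  by_contra hk'
  exact (mul_neg_of_pos_of_neg (hyB k hk) (hxN k (hN' ▸ mem_compl.2 hk'))).ne
    (complementary_slackness hx hy hAy k)

theorem unique (h : IsGoldmanTuckerPartition A B N) (h' : IsGoldmanTuckerPartition A B' N') :
    B = B' ∧ N = N' := by
  have hB : B = B' := (h.subset h').antisymm (h'.subset h)
  exact ⟨hB, by rw [h.eq_compl, h'.eq_compl, hB]⟩

end IsGoldmanTuckerPartition

theorem exists_isGoldmanTuckerPartition (A : Matrix m n 𝕜) :
    ∃ B, IsGoldmanTuckerPartition A B Bᶜ := by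
  obtain ⟨x, y, hx, hy, hAy, hxy⟩ := exists_strictly_complementary A
  refine ⟨univ.filter (0 < y ·), union_compl _, inter_compl _, ⟨x, fun i hi => ?_, fun i hi => ?_⟩,
    ⟨y, fun i hi => (mem_filter.1 hi).2, fun i hi => ?_, hAy⟩⟩
  · exact (mul_eq_zero.1 (complementary_slackness hx hy hAy i)).resolve_left
      (mem_filter.1 hi).2.ne'
  · exact (hxy i).resolve_left (by simpa using hi)
  · exact le_antisymm (not_lt.1 (by simpa using hi)) (hy i)

/-- Goldman–Tucker partition: there is a unique partition `B ∪ N = {1,…,m}` with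
`A_B xhat = 0, A_N xhat < 0` for some `xhat`, and `A_Bᵀ yhat_B = 0` for some `yhat_B > 0`
(encoded as a vector `yhat` positive on `B` and vanishing off `B`). -/
theorem stmt10 {m n : ℕ} (A : Matrix (Fin m) (Fin n) ℝ) :
    ∃! p : Finset (Fin m) × Finset (Fin m),
      p.1 ∪ p.2 = Finset.univ ∧ p.1 ∩ p.2 = ∅ ∧
      (∃ xhat : Fin n → ℝ, (∀ i ∈ p.1, A.mulVec xhat i = 0) ∧ (∀ i ∈ p.2, A.mulVec xhat i < 0)) ∧
      (∃ yhat : Fin m → ℝ, (∀ i ∈ p.1, 0 < yhat i) ∧ (∀ i ∉ p.1, yhat i = 0) ∧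
        A.transpose.mulVec yhat = 0) := by
  obtain ⟨B, hB⟩ := exists_isGoldmanTuckerPartition A
  refine ⟨(B, Bᶜ), hB, fun p hp => ?_⟩
  obtain ⟨h₁, h₂⟩ := IsGoldmanTuckerPartition.unique hp hB
  exact Prod.ext h₁ h₂
end

section
/- Let A ∈ ℝ^{m×n} and i ∈ {1,…,m}. The system 'A x ≤ 0 with (A x)_i < 0' has no solution x ∈ ℝⁿ if and only if there exists y ∈ ℝ^m with y ≥ 0, Aᵀ y = 0, and y_i = 1 (equivalently, y_i > 0). -/
/-!
By Farkas' lemma, the first alternative fails exactly when `-Aᵢ` lies in the cone spanned by the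
rows of `A`, i.e. `c ᵥ* A = -Aᵢ` for some `c ≥ 0`; then `y = (c + eᵢ) / (cᵢ + 1)` works.
Farkas' lemma itself is hyperplane separation from the cone `{c ᵥ* A | c ≥ 0}`, which is closed
because, by conic Carathéodory, it is a finite union of images of orthant faces on which
`c ↦ c ᵥ* A` is injective.
-/

open Function Matrix

section ConicCaratheodory

variable {ι : Type*}

def supportedOn (s : Set ι) : Submodule ℝ (ι → ℝ) := Submodule.pi sᶜ fun _ => ⊥

lemma mem_supportedOn {s : Set ι} {c : ι → ℝ} : c ∈ supportedOn s ↔ support c ⊆ s := by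
  simp only [supportedOn, Submodule.mem_pi, Submodule.mem_bot, Set.mem_compl_iff]
  exact ⟨fun h j hj => by_contra fun hjs => hj (h j hjs),
    fun h j hjs => by_contra fun hj => hjs (h hj)⟩

variable [Fintype ι]

lemma exists_sub_smul_nonneg_support_ssubset {c g : ι → ℝ} (hc : 0 ≤ c) (hg : ∃ j, 0 < g j)
    (hgc : support g ⊆ support c) :
    ∃ t : ℝ, 0 ≤ c - t • g ∧ support (c - t • g) ⊂ support c := by
  classical
  -- the minimum ratio test of the simplex method
  obtain ⟨t, ht0, hle, j₁, hgj₁, ht⟩ : ∃ t : ℝ, 0 ≤ t ∧ (∀ j, 0 < g j → t ≤ c j / g j) ∧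
      ∃ j₁, 0 < g j₁ ∧ t = c j₁ / g j₁ := by
    set T := Finset.univ.filter fun j => 0 < g j
    have hT : T.Nonempty := by simpa [T, Finset.filter_nonempty_iff] using hg
    obtain ⟨j₁, hj₁T, ht⟩ := T.exists_mem_eq_inf' hT fun j => c j / g j
    refine ⟨_, Finset.le_inf' hT _ fun j hj => div_nonneg (hc j) (Finset.mem_filter.mp hj).2.le,
      fun j hj => Finset.inf'_le _ (by simp [T, hj]), j₁, (Finset.mem_filter.mp hj₁T).2, ht⟩
  refine ⟨t, fun j => ?_, ⟨fun j hj => ?_, fun hsub => ?_⟩⟩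
  · simp only [Pi.zero_apply, Pi.sub_apply, Pi.smul_apply, smul_eq_mul, sub_nonneg]
    rcases le_or_gt (g j) 0 with hgj | hgj
    · have hcj : 0 ≤ c j := hc j
      linarith [mul_nonpos_of_nonneg_of_nonpos ht0 hgj]
    · exact (le_div_iff₀ hgj).mp (hle j hgj)
  · by_contra hcj
    have hgj : g j = 0 := by_contra fun h => hcj (hgc h)
    simp [notMem_support.mp hcj, hgj] at hj
  · refine hsub (hgc hgj₁.ne') ?_
    simp [ht, div_mul_cancel₀ _ hgj₁.ne']

variable {E : Type*} [AddCommGroup E] [Module ℝ E] (f : (ι → ℝ) →ₗ[ℝ] E)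

lemma exists_nonneg_eq_support_ssubset {c : ι → ℝ} (hc : 0 ≤ c)
    (hdep : ¬ Disjoint (LinearMap.ker f) (supportedOn (support c))) :
    ∃ d, 0 ≤ d ∧ f d = f c ∧ support d ⊂ support c := by
  obtain ⟨g, hgker, hgc, hg0⟩ : ∃ g, f g = 0 ∧ support g ⊆ support c ∧ g ≠ 0 := by
    simpa [Submodule.disjoint_def, mem_supportedOn] using hdep
  obtain ⟨g, hgker, hgc, hgpos⟩ : ∃ g, f g = 0 ∧ support g ⊆ support c ∧ ∃ j, 0 < g j := by
    obtain ⟨j, hj⟩ := Function.ne_iff.mp hg0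
    rcases (hj : g j ≠ 0).lt_or_gt with hneg | hpos
    · exact ⟨-g, by simp [hgker], by simpa using hgc, j, by simpa using hneg⟩
    · exact ⟨g, hgker, hgc, j, hpos⟩
  obtain ⟨t, hnonneg, hsupp⟩ := exists_sub_smul_nonneg_support_ssubset hc hgpos hgc
  exact ⟨c - t • g, hnonneg, by simp [hgker], hsupp⟩

/-- Conic Carathéodory theorem. -/
theorem exists_nonneg_eq_disjoint_ker {c : ι → ℝ} (hc : 0 ≤ c) :
    ∃ d, 0 ≤ d ∧ f d = f c ∧ Disjoint (LinearMap.ker f) (supportedOn (support d)) := by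
  obtain ⟨d, ⟨hd, hdc⟩, hmin⟩ := (InvImage.wf (fun d : ι → ℝ => support d) wellFounded_lt).has_min
    {d | 0 ≤ d ∧ f d = f c} ⟨c, hc, rfl⟩
  refine ⟨d, hd, hdc, by_contra fun hdep => ?_⟩
  obtain ⟨d', hd', hd'c, hlt⟩ := exists_nonneg_eq_support_ssubset f hd hdep
  exact hmin d' ⟨hd', hd'c.trans hdc⟩ hlt

end ConicCaratheodory

section Closed

variable {ι E : Type*} [Fintype ι] [AddCommGroup E] [Module ℝ E] [TopologicalSpace E]
  [IsTopologicalAddGroup E] [ContinuousSMul ℝ E] [T2Space E] (f : (ι → ℝ) →ₗ[ℝ] E)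

lemma isClosed_image_nonneg_of_disjoint_ker {W : Submodule ℝ (ι → ℝ)}
    (hW : Disjoint (LinearMap.ker f) W) : IsClosed (f '' {c | 0 ≤ c ∧ c ∈ W}) := by
  have hinj : LinearMap.ker (f.domRestrict W) = ⊥ := by
    rw [LinearMap.ker_domRestrict, ← Submodule.disjoint_iff_comap_eq_bot]
    exact hW.symm
  have himage : f '' {c | 0 ≤ c ∧ c ∈ W} = f.domRestrict W '' {w | 0 ≤ (w : ι → ℝ)} := by
    ext x
    simp only [Set.mem_image, Set.mem_ofPred_eq, Subtype.exists, LinearMap.domRestrict_apply]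
    grind
  rw [himage]
  exact (LinearMap.isClosedEmbedding_of_injective hinj).isClosedMap _
    (isClosed_Ici.preimage continuous_subtype_val)

theorem isClosed_image_nonneg : IsClosed (f '' {c | 0 ≤ c}) := by
  have hunion : f '' {c | 0 ≤ c} = ⋃ (s : Set ι) (_ : Disjoint (LinearMap.ker f) (supportedOn s)),
      f '' {c | 0 ≤ c ∧ c ∈ supportedOn s} := by
    ext x
    simp only [Set.mem_image, Set.mem_iUnion, Set.mem_ofPred_eq]
    constructor
    · rintro ⟨c, hc, rfl⟩
      obtain ⟨d, hd, hdc, hdisj⟩ := exists_nonneg_eq_disjoint_ker f hc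
      exact ⟨support d, hdisj, d, ⟨hd, mem_supportedOn.mpr subset_rfl⟩, hdc⟩
    · rintro ⟨s, -, c, ⟨hc, -⟩, rfl⟩
      exact ⟨c, hc, rfl⟩
  rw [hunion]
  exact isClosed_iUnion_of_finite fun s => isClosed_iUnion_of_finite
    (isClosed_image_nonneg_of_disjoint_ker f)

end Closed

/-- **Farkas' lemma**. -/
theorem Matrix.exists_nonneg_vecMul_eq_iff {ι κ : Type*} [Fintype ι] [Fintype κ]
    (A : Matrix ι κ ℝ) (b : κ → ℝ) :
    (∃ y, 0 ≤ y ∧ y ᵥ* A = b) ↔ ∀ x, 0 ≤ A *ᵥ x → 0 ≤ b ⬝ᵥ x := by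
  constructor
  · rintro ⟨y, hy, rfl⟩ x hx
    rw [← dotProduct_mulVec]
    exact dotProduct_nonneg_of_nonneg hy hx
  classical
  intro h
  by_contra hb
  let C : ProperCone ℝ (κ → ℝ) :=
    ⟨(PointedCone.positive ℝ (ι → ℝ)).map A.vecMulLinear, isClosed_image_nonneg A.vecMulLinear⟩
  obtain ⟨φ, hφC, hφb⟩ := C.hyperplane_separation_point (x₀ := b) hb
  set x := (dotProductEquiv ℝ κ).symm φ
  have hφ : ∀ z, φ z = z ⬝ᵥ x := fun z => by
    rw [dotProduct_comm]
    exact (LinearMap.congr_fun ((dotProductEquiv ℝ κ).apply_symm_apply φ.toLinearMap) z).symm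
  refine hφb.not_ge ((hφ b).symm ▸ h x fun j => ?_)
  have hrow : (A *ᵥ x) j = φ (Pi.single j 1 ᵥ* A) := by rw [single_one_vecMul, hφ]; rfl
  rw [Pi.zero_apply, hrow]
  exact hφC _ ⟨Pi.single j 1, by simp [Pi.single_nonneg], rfl⟩

/-- Farkas-type characterization: `A x ≤ 0, (A x)_i < 0` has no solution iff
there is `y ≥ 0` with `Aᵀ y = 0` and `y_i = 1`. -/
theorem stmt11 {m n : ℕ} (A : Matrix (Fin m) (Fin n) ℝ) (i : Fin m) :
    (¬ ∃ x : Fin n → ℝ, (∀ j, A.mulVec x j ≤ 0) ∧ A.mulVec x i < 0) ↔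
      (∃ y : Fin m → ℝ, (∀ j, 0 ≤ y j) ∧ A.transpose.mulVec y = 0 ∧ y i = 1) := by
  constructor
  · intro hno
    obtain ⟨c, hc, hcA⟩ := (exists_nonneg_vecMul_eq_iff A (-A i)).mpr fun x hx => by
      by_contra hpos
      refine hno ⟨-x, fun j => ?_, ?_⟩
      · simpa [mulVec_neg] using hx j
      · simpa [mulVec_neg, mulVec] using hpos
    have hci : 0 < c i + 1 := by
      have : 0 ≤ c i := hc i
      linarith
    refine ⟨(c i + 1)⁻¹ • (c + Pi.single i 1), fun j => ?_, ?_, ?_⟩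
    · exact smul_nonneg (inv_nonneg.mpr hci.le) (add_nonneg hc (Pi.single_nonneg.mpr zero_le_one)) j
    · rw [mulVec_transpose, smul_vecMul, add_vecMul, hcA, single_one_vecMul, row, neg_add_cancel,
        smul_zero]
    · simp [inv_mul_cancel₀ hci.ne']
  · rintro ⟨y, hy, hAy, hyi⟩ ⟨x, hx, hxi⟩
    have hpos : 0 < y ⬝ᵥ -(A *ᵥ x) := Finset.sum_pos'
      (fun j _ => mul_nonneg (hy j) (neg_nonneg.mpr (hx j))) ⟨i, Finset.mem_univ i, by simpa [hyi]⟩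
    rw [dotProduct_neg, dotProduct_mulVec, ← mulVec_transpose, hAy, zero_dotProduct,
      neg_zero] at hpos
    exact lt_irrefl 0 hpos
end

section
/- Let L ⊆ ℝⁿ be a linear subspace and K ⊆ ℝⁿ a closed convex cone, and suppose x̄ ∈ L satisfies x̄ + u ∈ K for all ‖u‖ ≤ 1. Then for every v ∈ ℝⁿ there exist x ∈ L and y ∈ K with x − y = v and ‖x‖ ≤ ‖x̄‖ · ‖v‖; consequently Ĥ(L,K) ≤ 1 + 2‖x̄‖. -/
/-!
Scaling the unit ball around `xbar` by `s > p v` puts `s • xbar - v` in the cone `K`; closedness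
lets `s` go down to `p v`, so `v = p v • xbar - (p v • xbar - v)` is the required decomposition.
For the Hoffman bound, take `wL ∈ L` and `wK ∈ K` almost nearest to `u`, decompose `wK - wL = x - y`
and correct `wL` to `wL + x = wK + y ∈ L ∩ K`; this moves it by at most
`‖xbar‖ ‖wK - wL‖ ≤ ‖xbar‖ (d(u, L) + d(u, K))`.
-/

open Set

section

variable {E : Type*} [AddCommGroup E] [Module ℝ E] (p : Seminorm ℝ E)

theorem Convex.add_mem_of_smul_mem {K : Set E} (hconv : Convex ℝ K)
    (hcone : ∀ c : ℝ, 0 < c → ∀ x ∈ K, c • x ∈ K) {a b : E} (ha : a ∈ K) (hb : b ∈ K) :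
    a + b ∈ K := by
  convert hcone 2 two_pos _ (hconv ha hb (by norm_num : (0 : ℝ) ≤ 1 / 2)
    (by norm_num : (0 : ℝ) ≤ 1 / 2) (by norm_num)) using 1
  rw [smul_add, smul_smul, smul_smul]
  norm_num

theorem smul_sub_mem_of_seminorm_le {K : Set E} (hcone : ∀ c : ℝ, 0 < c → ∀ x ∈ K, c • x ∈ K)
    {xbar : E} (hball : ∀ u, p u ≤ 1 → xbar + u ∈ K) {s : ℝ} {v : E} (hs : 0 < s)
    (hv : p v ≤ s) : s • xbar - v ∈ K := by
  have h : xbar + (-s⁻¹) • v ∈ K := hball _ <| by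
    rw [map_smul_eq_mul, norm_neg, norm_inv, Real.norm_of_nonneg hs.le]
    exact inv_mul_le_one_of_le₀ hv hs.le
  convert hcone s hs _ h using 1
  rw [smul_add, smul_smul, mul_neg, mul_inv_cancel₀ hs.ne', neg_smul, one_smul, sub_eq_add_neg]

theorem seminorm_smul_sub_mem [TopologicalSpace E] [ContinuousSub E] [ContinuousSMul ℝ E]
    {K : Set E} (hclosed : IsClosed K) (hcone : ∀ c : ℝ, 0 < c → ∀ x ∈ K, c • x ∈ K)
    {xbar : E} (hball : ∀ u, p u ≤ 1 → xbar + u ∈ K) (v : E) : p v • xbar - v ∈ K := by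
  have hS : IsClosed {s : ℝ | s • xbar - v ∈ K} := hclosed.preimage (by fun_prop)
  have hIoi : Ioi (p v) ⊆ {s : ℝ | s • xbar - v ∈ K} := fun s hs =>
    smul_sub_mem_of_seminorm_le p hcone hball ((apply_nonneg p v).trans_lt hs) (le_of_lt hs)
  exact hS.closure_subset_iff.2 hIoi (by rw [closure_Ioi]; exact self_mem_Ici)

theorem exists_mem_inter_seminorm_sub_le {L K : Set E} {c : ℝ}
    (hL : ∀ a ∈ L, ∀ b ∈ L, a + b ∈ L) (hK : ∀ a ∈ K, ∀ b ∈ K, a + b ∈ K)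
    (hdecomp : ∀ v, ∃ x ∈ L, ∃ y ∈ K, x - y = v ∧ p x ≤ c * p v)
    {wL wK : E} (hwL : wL ∈ L) (hwK : wK ∈ K) :
    ∃ w ∈ L ∩ K, p (w - wL) ≤ c * p (wK - wL) := by
  obtain ⟨x, hx, y, hy, hxy, hpx⟩ := hdecomp (wK - wL)
  have hw : wL + x = wK + y := by rw [sub_eq_iff_eq_add.1 hxy]; abel
  exact ⟨wL + x, ⟨hL _ hwL _ hx, hw ▸ hK _ hwK _ hy⟩, by rwa [add_sub_cancel_left]⟩

/-- `dist(u, S)` for the seminorm `p`; it is `0` when `S` is empty. -/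
noncomputable def seminormInfDist (S : Set E) (u : E) : ℝ :=
  sInf {s | ∃ w ∈ S, s = p (u - w)}

variable {p}

theorem seminormInfDist_nonneg {S : Set E} {u : E} : 0 ≤ seminormInfDist p S u :=
  Real.sInf_nonneg (by rintro _ ⟨w, -, rfl⟩; exact apply_nonneg p _)

theorem seminormInfDist_le {S : Set E} {u w : E} (hw : w ∈ S) :
    seminormInfDist p S u ≤ p (u - w) :=
  csInf_le ⟨0, by rintro _ ⟨w, -, rfl⟩; exact apply_nonneg p _⟩ ⟨w, hw, rfl⟩

theorem exists_seminorm_sub_lt_seminormInfDist_add {S : Set E} (hS : S.Nonempty) (u : E)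
    {ε : ℝ} (hε : 0 < ε) : ∃ w ∈ S, p (u - w) < seminormInfDist p S u + ε := by
  obtain ⟨w, hw⟩ := hS
  obtain ⟨_, ⟨w', hw', rfl⟩, h⟩ :=
    Real.lt_sInf_add_pos (⟨_, w, hw, rfl⟩ : {s | ∃ w ∈ S, s = p (u - w)}.Nonempty) hε
  exact ⟨w', hw', h⟩

theorem seminormInfDist_inter_le {L K : Set E} {c : ℝ} (hc : 0 ≤ c)
    (hL : L.Nonempty) (hK : K.Nonempty)
    (H : ∀ wL ∈ L, ∀ wK ∈ K, ∃ w ∈ L ∩ K, p (w - wL) ≤ c * p (wK - wL)) (u : E) :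
    seminormInfDist p (L ∩ K) u ≤
      (1 + 2 * c) * max (seminormInfDist p L u) (seminormInfDist p K u) := by
  set m := max (seminormInfDist p L u) (seminormInfDist p K u)
  refine le_of_forall_pos_le_add fun ε hε => ?_
  set δ := ε / (1 + 2 * c)
  have hδ : (1 + 2 * c) * δ = ε := mul_div_cancel₀ _ (by positivity)
  obtain ⟨wL, hwL, hdL⟩ := exists_seminorm_sub_lt_seminormInfDist_add hL u (by positivity : 0 < δ)
  obtain ⟨wK, hwK, hdK⟩ := exists_seminorm_sub_lt_seminormInfDist_add hK u (by positivity : 0 < δ)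
  obtain ⟨w, hw, hpw⟩ := H wL hwL wK hwK
  have hLm : seminormInfDist p L u ≤ m := le_max_left _ _
  have hKm : seminormInfDist p K u ≤ m := le_max_right _ _
  have hwLm : p (u - wL) ≤ m + δ := by linarith
  have hwKm : p (u - wK) ≤ m + δ := by linarith
  calc seminormInfDist p (L ∩ K) u ≤ p (u - w) := seminormInfDist_le hw
    _ ≤ p (u - wL) + p (w - wL) := by simpa using map_sub_le_add p (u - wL) (w - wL)
    _ ≤ p (u - wL) + c * (p (u - wL) + p (u - wK)) := by
        gcongr
        exact hpw.trans (mul_le_mul_of_nonneg_left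
          (by simpa using map_sub_le_add p (u - wL) (u - wK)) hc)
    _ ≤ (m + δ) + c * ((m + δ) + (m + δ)) := by gcongr
    _ = (1 + 2 * c) * m + ε := by rw [← hδ]; ring

variable (p)

/-- The Hoffman constant `Ĥ(L, K)`; a quotient `0 / 0` counts as `0`. -/
noncomputable def hoffmanConstant (L K : Set E) : ℝ :=
  sSup {r | ∃ u, u ∉ L ∩ K ∧
    r = seminormInfDist p (L ∩ K) u / max (seminormInfDist p L u) (seminormInfDist p K u)}

variable {p}

theorem hoffmanConstant_le {L K : Set E} {c : ℝ} (hc : 0 ≤ c) (hL : L.Nonempty) (hK : K.Nonempty)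
    (H : ∀ wL ∈ L, ∀ wK ∈ K, ∃ w ∈ L ∩ K, p (w - wL) ≤ c * p (wK - wL)) :
    hoffmanConstant p L K ≤ 1 + 2 * c :=
  Real.sSup_le (by
    rintro _ ⟨u, -, rfl⟩
    exact div_le_of_le_mul₀ (le_max_of_le_left seminormInfDist_nonneg) (by positivity)
      (seminormInfDist_inter_le hc hL hK H u)) (by positivity)

end

theorem stmt13_general {n : ℕ} (nn : Seminorm ℝ (Fin n → ℝ))
    (L : Submodule ℝ (Fin n → ℝ)) (K : Set (Fin n → ℝ))
    (hKclosed : IsClosed K) (hKconv : Convex ℝ K)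
    (hKcone : ∀ c : ℝ, 0 < c → ∀ x ∈ K, c • x ∈ K)
    (xbar : Fin n → ℝ) (hxbarL : xbar ∈ L)
    (hxbarK : ∀ u : Fin n → ℝ, nn u ≤ 1 → xbar + u ∈ K) :
    (∀ v : Fin n → ℝ, ∃ x ∈ (L : Set (Fin n → ℝ)), ∃ y ∈ K,
        x - y = v ∧ nn x ≤ nn xbar * nn v) ∧
    sSup {r | ∃ u : Fin n → ℝ, u ∉ (L : Set (Fin n → ℝ)) ∩ K ∧
        r = sInf {s | ∃ w ∈ (L : Set (Fin n → ℝ)) ∩ K, s = nn (u - w)} /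
          max (sInf {s | ∃ w ∈ (L : Set (Fin n → ℝ)), s = nn (u - w)})
              (sInf {s | ∃ w ∈ K, s = nn (u - w)})} ≤
      1 + 2 * nn xbar := by
  have hdecomp : ∀ v, ∃ x ∈ (L : Set (Fin n → ℝ)), ∃ y ∈ K,
      x - y = v ∧ nn x ≤ nn xbar * nn v := fun v =>
    ⟨nn v • xbar, L.smul_mem _ hxbarL, _, seminorm_smul_sub_mem nn hKclosed hKcone hxbarK v,
      sub_sub_cancel _ _,
      by rw [map_smul_eq_mul, Real.norm_of_nonneg (apply_nonneg nn v), mul_comm]⟩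
  have hxbarK' : xbar ∈ K := by simpa using hxbarK 0 (by simp)
  refine ⟨hdecomp, hoffmanConstant_le (apply_nonneg nn xbar) ⟨xbar, hxbarL⟩ ⟨xbar, hxbarK'⟩ ?_⟩
  exact fun wL hwL wK hwK => exists_mem_inter_seminorm_sub_le nn
    (fun _ ha _ hb => L.add_mem ha hb) (fun _ ha _ hb => hKconv.add_mem_of_smul_mem hKcone ha hb)
    hdecomp hwL hwK

/-- If `xbar ∈ L` and the unit ball centered at `xbar` is contained in the
closed convex cone `K`, then every `v` decomposes as `v = x - y` with `x ∈ L`,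
`y ∈ K`, `‖x‖ ≤ ‖xbar‖⬝‖v‖`; consequently `Ĥ(L,K) ≤ 1 + 2‖xbar‖`. -/
theorem stmt13 {n : ℕ} (nn : Seminorm ℝ (Fin n → ℝ)) (hnn : ∀ x, nn x = 0 → x = 0)
    (L : Submodule ℝ (Fin n → ℝ)) (K : Set (Fin n → ℝ))
    (hKclosed : IsClosed K) (hKconv : Convex ℝ K)
    (hKcone : ∀ c : ℝ, 0 < c → ∀ x ∈ K, c • x ∈ K)
    (xbar : Fin n → ℝ) (hxbarL : xbar ∈ L)
    (hxbarK : ∀ u : Fin n → ℝ, nn u ≤ 1 → xbar + u ∈ K) :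
    (∀ v : Fin n → ℝ, ∃ x ∈ (L : Set (Fin n → ℝ)), ∃ y ∈ K,
        x - y = v ∧ nn x ≤ nn xbar * nn v) ∧
    sSup {r | ∃ u : Fin n → ℝ, u ∉ (L : Set (Fin n → ℝ)) ∩ K ∧
        r = sInf {s | ∃ w ∈ (L : Set (Fin n → ℝ)) ∩ K, s = nn (u - w)} /
          max (sInf {s | ∃ w ∈ (L : Set (Fin n → ℝ)), s = nn (u - w)})
              (sInf {s | ∃ w ∈ K, s = nn (u - w)})} ≤
      1 + 2 * nn xbar :=
  stmt13_general nn L K hKclosed hKconv hKcone xbar hxbarL hxbarK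
end

section
/- Let A ∈ ℝ^{m×n} with Goldman–Tucker partition B, N (so A_B x̂ = 0, A_N x̂ < 0 for some x̂, and A_Bᵀ ŷ_B = 0 for some ŷ_B > 0). Let L = {x : A_B x = 0} and K = {x : A_N x ≤ 0}. Then {x : A x ≤ 0} = L ∩ K and H₀(A) ≤ Ĥ(L,K) · max{H₀(A_N), H₀(A_B)}. -/
/-!
`ŷ_B > 0` with `ŷᵀ A = 0` forces `A_B x = 0` as soon as `A_B x ≤ 0`. This gives
`{x | A x ≤ 0} = L ∩ K` and lets the distances chain:
`dist(u, L ∩ K) ≤ Ĥ(L,K) max{dist(u,L), dist(u,K)}`, with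
`dist(u,K) ≤ H₀(A_N) ‖(A_N u)⁺‖ ≤ H₀(A_N) ‖(A u)⁺‖` by compatibility, and likewise for `L`.

Since the `sSup` of an unbounded set of reals is `0`, the constants on the right must be shown
finite. A point violating `K` by `g` is repaired by adding `(g/δ) x̂`, which keeps it in `L`;
this bounds `H₀(A_N)` and `Ĥ(L,K)`. For `H₀(A_B)`, `ŷ` bounds `|A_B u|` by a multiple of
`‖(A_B u)⁺‖`, and `dist(u, ker A_B) ≤ C ‖A_B u‖` via an inner inverse of `A_B`.
-/

theorem LinearMap.exists_inner_inverse {K V W : Type*} [DivisionRing K]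
    [AddCommGroup V] [Module K V] [AddCommGroup W] [Module K W] (T : V →ₗ[K] W) :
    ∃ S : W →ₗ[K] V, ∀ x, T (S (T x)) = T x := by
  obtain ⟨g, hg⟩ := T.rangeRestrict.exists_rightInverse_of_surjective T.range_rangeRestrict
  obtain ⟨S, hS⟩ := LinearMap.exists_extend g
  refine ⟨S, fun x => ?_⟩
  set y : range T := ⟨T x, mem_range_self T x⟩
  rw [show S (T x) = g y from LinearMap.congr_fun hS y]
  exact congrArg Subtype.val (LinearMap.congr_fun hg y)

namespace Seminorm

section FiniteDimensional

variable {E : Type*} [NormedAddCommGroup E] [NormedSpace ℝ E] [FiniteDimensional ℝ E]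
  (p : Seminorm ℝ E)

theorem continuous_of_finiteDimensional : Continuous p :=
  continuousOn_univ.mp (p.convexOn.continuousOn isOpen_univ)

variable {p} (hp : ∀ x, p x = 0 → x = 0)
include hp

theorem exists_norm_le_mul : ∃ C, 0 ≤ C ∧ ∀ x, ‖x‖ ≤ C * p x := by
  rcases subsingleton_or_nontrivial E with hE | hE
  · exact ⟨0, le_rfl, fun x => by simp [Subsingleton.elim x 0]⟩
  obtain ⟨x₀, hx₀, hmin⟩ := (isCompact_sphere (0 : E) 1).exists_isMinOn
    (NormedSpace.sphere_nonempty.2 zero_le_one) p.continuous_of_finiteDimensional.continuousOn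
  have hpx₀ : 0 < p x₀ :=
    (apply_nonneg p x₀).lt_of_ne' (mt (hp x₀) (Metric.ne_of_mem_sphere hx₀ one_ne_zero))
  refine ⟨(p x₀)⁻¹, inv_nonneg.2 hpx₀.le, fun x => ?_⟩
  rcases eq_or_ne x 0 with rfl | hx
  · simp
  have hmem : (‖x‖⁻¹ : ℝ) • x ∈ Metric.sphere (0 : E) 1 := by
    simpa using norm_smul_inv_norm (𝕜 := ℝ) hx
  have h : p x₀ ≤ p ((‖x‖⁻¹ : ℝ) • x) := hmin hmem
  rw [map_smul_eq_mul, norm_inv, norm_norm, ← div_eq_inv_mul,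
    le_div_iff₀ (norm_pos_iff.2 hx)] at h
  rw [← div_eq_inv_mul, le_div_iff₀ hpx₀, mul_comm]
  exact h

theorem exists_norm_map_le_mul {F : Type*} [SeminormedAddCommGroup F] [NormedSpace ℝ F]
    (f : E →ₗ[ℝ] F) : ∃ C, 0 ≤ C ∧ ∀ x, ‖f x‖ ≤ C * p x := by
  obtain ⟨C, hC0, hC⟩ := exists_norm_le_mul hp
  set f' := LinearMap.toContinuousLinearMap f
  refine ⟨‖f'‖ * C, by positivity, fun x => ?_⟩
  calc ‖f x‖ ≤ ‖f'‖ * ‖x‖ := f'.le_opNorm x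
    _ ≤ ‖f'‖ * (C * p x) := by gcongr; exact hC x
    _ = ‖f'‖ * C * p x := by ring

end FiniteDimensional

section InfDist

variable {E : Type*} [AddCommGroup E] [Module ℝ E] (p : Seminorm ℝ E)

-- `sInf ∅ = 0`, so the distance to the empty set is `0`.
noncomputable def infDist (u : E) (S : Set E) : ℝ :=
  sInf {s | ∃ x ∈ S, s = p (u - x)}

variable {p} {u : E} {S T : Set E}

theorem infDist_nonneg : 0 ≤ p.infDist u S :=
  Real.sInf_nonneg (by rintro _ ⟨x, -, rfl⟩; exact apply_nonneg p _)

theorem infDist_le {x : E} (hx : x ∈ S) : p.infDist u S ≤ p (u - x) :=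
  csInf_le ⟨0, by rintro _ ⟨y, -, rfl⟩; exact apply_nonneg p _⟩ ⟨x, hx, rfl⟩

theorem infDist_eq_zero_of_mem (hu : u ∈ S) : p.infDist u S = 0 :=
  le_antisymm (by simpa using infDist_le (p := p) (u := u) hu) infDist_nonneg

theorem exists_lt_of_infDist_lt (hS : S.Nonempty) {r : ℝ} (h : p.infDist u S < r) :
    ∃ x ∈ S, p (u - x) < r := by
  obtain ⟨x₀, hx₀⟩ := hS
  obtain ⟨_, ⟨x, hx, rfl⟩, hlt⟩ :=
    exists_lt_of_csInf_lt (s := {s | ∃ x ∈ S, s = p (u - x)}) ⟨_, x₀, hx₀, rfl⟩ h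
  exact ⟨x, hx, hlt⟩

theorem le_mul_max_infDist (hS : S.Nonempty) (hT : T.Nonempty) {a C : ℝ} (hC : 0 ≤ C)
    (h : ∀ x ∈ S, ∀ y ∈ T, a ≤ C * max (p (u - x)) (p (u - y))) :
    a ≤ C * max (p.infDist u S) (p.infDist u T) := by
  set M := max (p.infDist u S) (p.infDist u T)
  refine ge_of_tendsto ((continuous_const_mul C).tendsto M |>.mono_left nhdsWithin_le_nhds)
    (eventually_nhdsWithin_of_forall (s := Set.Ioi M) fun r hr => ?_)
  obtain ⟨x, hx, hxr⟩ := exists_lt_of_infDist_lt hS (lt_of_le_of_lt (le_max_left _ _) hr)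
  obtain ⟨y, hy, hyr⟩ := exists_lt_of_infDist_lt hT (lt_of_le_of_lt (le_max_right _ _) hr)
  exact (h x hx y hy).trans (mul_le_mul_of_nonneg_left (max_le hxr.le hyr.le) hC)

end InfDist

theorem exists_infDist_ker_le {E F : Type*} [AddCommGroup E] [Module ℝ E]
    [NormedAddCommGroup F] [NormedSpace ℝ F] [FiniteDimensional ℝ F]
    (p : Seminorm ℝ E) (T : E →ₗ[ℝ] F) :
    ∃ C, 0 ≤ C ∧ ∀ u, p.infDist u (LinearMap.ker T) ≤ C * ‖T u‖ := by
  obtain ⟨S, hS⟩ := T.exists_inner_inverse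
  obtain ⟨C, hC0, hC⟩ := (p.comp S).bound_of_continuous_normedSpace
    (p.comp S).continuous_of_finiteDimensional
  refine ⟨C, hC0.le, fun u => ?_⟩
  calc p.infDist u (LinearMap.ker T) ≤ p (u - (u - S (T u))) :=
        infDist_le (by simp [hS])
    _ = p (S (T u)) := by rw [sub_sub_cancel]
    _ ≤ C * ‖T u‖ := hC (T u)

end Seminorm

theorem le_sSup_div_mul {α : Type*} {P : α → Prop} {f g : α → ℝ} {C : ℝ}
    (hg : ∀ a, 0 ≤ g a) (hfg : ∀ a, P a → f a ≤ C * g a) {a : α} (ha : P a) :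
    f a ≤ sSup {r | ∃ a, P a ∧ r = f a / g a} * g a := by
  rcases (hg a).eq_or_lt with h0 | hpos
  · simpa [← h0] using hfg a ha
  have hbdd : BddAbove {r | ∃ a, P a ∧ r = f a / g a} := by
    refine ⟨max C 0, ?_⟩
    rintro _ ⟨b, hb, rfl⟩
    exact div_le_of_le_mul₀ (hg b) (le_max_right _ _)
      ((hfg b hb).trans (mul_le_mul_of_nonneg_right (le_max_left _ _) (hg b)))
  rw [← div_le_iff₀ hpos]
  exact le_csSup hbdd ⟨a, ha, rfl⟩

theorem sSup_div_nonneg {α : Type*} {P : α → Prop} {f g : α → ℝ}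
    (hf : ∀ a, 0 ≤ f a) (hg : ∀ a, 0 ≤ g a) :
    0 ≤ sSup {r | ∃ a, P a ∧ r = f a / g a} :=
  Real.sSup_nonneg (by rintro _ ⟨a, -, rfl⟩; exact div_nonneg (hf a) (hg a))

theorem Finset.exists_pos_forall_le_neg {ι : Type*} (s : Finset ι) {f : ι → ℝ}
    (hf : ∀ i ∈ s, f i < 0) : ∃ δ, 0 < δ ∧ ∀ i ∈ s, f i ≤ -δ := by
  rcases s.eq_empty_or_nonempty with rfl | hs
  · exact ⟨1, one_pos, by simp⟩
  exact ⟨-s.sup' hs f, neg_pos.2 ((s.sup'_lt_iff hs).2 hf),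
    fun i hi => (neg_neg (s.sup' hs f)).symm ▸ s.le_sup' f hi⟩

open Matrix Finset

section DotProduct

variable {ι : Type*} [Fintype ι] {B : Finset ι} {y v : ι → ℝ}

theorem dotProduct_eq_sum_of_eq_zero (hy0 : ∀ i ∉ B, y i = 0) :
    y ⬝ᵥ v = ∑ i ∈ B, y i * v i :=
  (sum_subset (subset_univ B) fun i _ hi => by simp [hy0 i hi]).symm

variable (hy : ∀ i ∈ B, 0 < y i) (hy0 : ∀ i ∉ B, y i = 0) (h : y ⬝ᵥ v = 0)
include hy hy0 h

theorem eq_zero_of_dotProduct_eq_zero (hv : ∀ i ∈ B, v i ≤ 0) : ∀ i ∈ B, v i = 0 := by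
  rw [dotProduct_eq_sum_of_eq_zero hy0] at h
  have hterm := (sum_eq_zero_iff_of_nonpos fun i hi =>
    mul_nonpos_of_nonneg_of_nonpos (hy i hi).le (hv i hi)).1 h
  exact fun i hi => (mul_eq_zero.1 (hterm i hi)).resolve_left (hy i hi).ne'

theorem neg_le_of_dotProduct_eq_zero {P : ℝ} (hP : 0 ≤ P) (hv : ∀ i ∈ B, v i ≤ P)
    {i : ι} (hi : i ∈ B) : -v i ≤ (∑ j ∈ B, y j) / y i * P := by
  classical
  rw [dotProduct_eq_sum_of_eq_zero hy0, ← add_sum_erase B _ hi] at h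
  have hrest : ∑ j ∈ B.erase i, y j * v j ≤ (∑ j ∈ B, y j) * P := calc
    _ ≤ ∑ j ∈ B.erase i, y j * P := sum_le_sum fun j hj =>
        mul_le_mul_of_nonneg_left (hv j (mem_of_mem_erase hj)) (hy j (mem_of_mem_erase hj)).le
    _ ≤ ∑ j ∈ B, y j * P := sum_le_sum_of_subset_of_nonneg (erase_subset i B)
        fun j hj _ => mul_nonneg (hy j hj).le hP
    _ = _ := (sum_mul ..).symm
  rw [div_mul_eq_mul_div, le_div_iff₀ (hy i hi)]
  linarith

end DotProduct

section PosPartOn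

variable {ι : Type*} [DecidableEq ι]

def posPartOn (I : Finset ι) (v : ι → ℝ) : ι → ℝ := fun i => if i ∈ I then max (v i) 0 else 0

theorem abs_posPartOn_le (I : Finset ι) (v : ι → ℝ) (i : ι) :
    |posPartOn I v i| ≤ |max (v i) 0| := by
  unfold posPartOn
  split_ifs <;> simp

theorem le_norm_posPartOn [Fintype ι] {I : Finset ι} (v : ι → ℝ) {i : ι} (hi : i ∈ I) :
    v i ≤ ‖posPartOn I v‖ :=
  calc v i ≤ |max (v i) 0| := (le_max_left _ _).trans (le_abs_self _)
    _ = ‖posPartOn I v i‖ := by simp [posPartOn, hi]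
    _ ≤ ‖posPartOn I v‖ := norm_le_pi_norm _ i

end PosPartOn

namespace Matrix

variable {ι κ : Type*} [Fintype κ] (A : Matrix ι κ ℝ)

def rowCone (I : Finset ι) : Set (κ → ℝ) := {x | ∀ i ∈ I, (A *ᵥ x) i ≤ 0}

def rowKer (I : Finset ι) : Set (κ → ℝ) := {x | ∀ i ∈ I, (A *ᵥ x) i = 0}

variable {A}

theorem zero_mem_rowCone (I : Finset ι) : 0 ∈ A.rowCone I := by simp [rowCone]

theorem zero_mem_rowKer (I : Finset ι) : 0 ∈ A.rowKer I := by simp [rowKer]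

theorem rowKer_eq_ker (I : Finset ι) :
    A.rowKer I = LinearMap.ker (LinearMap.funLeft ℝ ℝ (Subtype.val : I → ι) ∘ₗ A.mulVecLin) := by
  ext x
  simp [rowKer, funext_iff, LinearMap.funLeft]

theorem add_smul_mem_rowKer {I : Finset ι} {x x' : κ → ℝ} (hx : x ∈ A.rowKer I)
    (hx' : x' ∈ A.rowKer I) (c : ℝ) : x + c • x' ∈ A.rowKer I := fun i hi => by
  simp [mulVec_add, mulVec_smul, hx i hi, hx' i hi]

theorem add_smul_mem_rowCone {I : Finset ι} {x x' : κ → ℝ} {g δ : ℝ} (hδ : 0 < δ)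
    (hg : 0 ≤ g) (hx : ∀ i ∈ I, (A *ᵥ x) i ≤ g) (hx' : ∀ i ∈ I, (A *ᵥ x') i ≤ -δ) :
    x + (g / δ) • x' ∈ A.rowCone I := fun i hi => by
  have h := mul_le_mul_of_nonneg_left (hx' i hi) (div_nonneg hg hδ.le)
  rw [mul_neg, div_mul_cancel₀ g hδ.ne'] at h
  simp only [mulVec_add, mulVec_smul, Pi.add_apply, Pi.smul_apply, smul_eq_mul]
  linarith [hx i hi]

section DualPositive

variable [Fintype ι] {B : Finset ι} {y : ι → ℝ}

theorem dotProduct_mulVec_eq_zero (hA : Aᵀ *ᵥ y = 0) (x : κ → ℝ) : y ⬝ᵥ (A *ᵥ x) = 0 := by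
  rw [dotProduct_mulVec, ← mulVec_transpose, hA, zero_dotProduct]

variable (hy : ∀ i ∈ B, 0 < y i) (hy0 : ∀ i ∉ B, y i = 0) (hA : Aᵀ *ᵥ y = 0)
include hy hy0 hA

theorem rowCone_eq_rowKer_of_dual_pos : A.rowCone B = A.rowKer B := by
  ext x
  exact ⟨eq_zero_of_dotProduct_eq_zero hy hy0 (dotProduct_mulVec_eq_zero hA x),
    fun hx i hi => (hx i hi).le⟩

theorem setOf_mulVec_nonpos_eq [DecidableEq ι] {N : Finset ι} (hBN : B ∪ N = univ) :
    {x | ∀ i, (A *ᵥ x) i ≤ 0} = A.rowKer B ∩ A.rowCone N := by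
  rw [← rowCone_eq_rowKer_of_dual_pos hy hy0 hA]
  ext x
  refine ⟨fun hx => ⟨fun i _ => hx i, fun i _ => hx i⟩, fun ⟨hxB, hxN⟩ i => ?_⟩
  rcases mem_union.1 (hBN ▸ mem_univ i) with hi | hi
  exacts [hxB i hi, hxN i hi]

theorem exists_infDist_rowCone_le_of_dual_pos [DecidableEq ι] (nn : Seminorm ℝ (κ → ℝ))
    {nm : Seminorm ℝ (ι → ℝ)} (hnm : ∀ v, nm v = 0 → v = 0) :
    ∃ C, ∀ u, nn.infDist u (A.rowCone B) ≤ C * nm (posPartOn B (A *ᵥ u)) := by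
  set T := LinearMap.funLeft ℝ ℝ (Subtype.val : B → ι) ∘ₗ A.mulVecLin
  obtain ⟨CT, hCT0, hCT⟩ := nn.exists_infDist_ker_le T
  obtain ⟨Cm, -, hCm⟩ := Seminorm.exists_norm_le_mul hnm
  have hratio : ∀ i ∈ B, 0 ≤ (∑ j ∈ B, y j) / y i := fun i hi =>
    div_nonneg (sum_nonneg fun j hj => (hy j hj).le) (hy i hi).le
  set R := ∑ i ∈ B, (∑ j ∈ B, y j) / y i
  refine ⟨CT * (1 + R) * Cm, fun u => ?_⟩
  set P := ‖posPartOn B (A *ᵥ u)‖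
  have hP : ∀ i ∈ B, (A *ᵥ u) i ≤ P := fun i hi => le_norm_posPartOn _ hi
  have hR0 : 0 ≤ 1 + R := by linarith [sum_nonneg hratio]
  have hP0 : 0 ≤ P := norm_nonneg _
  have hTu : ‖T u‖ ≤ (1 + R) * P := by
    refine (pi_norm_le_iff_of_nonneg (mul_nonneg hR0 hP0)).2 fun ⟨i, hi⟩ => abs_le.2 ⟨?_, ?_⟩
    · have hneg := neg_le_of_dotProduct_eq_zero hy hy0 (dotProduct_mulVec_eq_zero hA u)
        hP0 hP hi
      have hR := mul_le_mul_of_nonneg_right (single_le_sum hratio hi) hP0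
      change -((1 + R) * P) ≤ (A *ᵥ u) i
      nlinarith
    · change (A *ᵥ u) i ≤ (1 + R) * P
      nlinarith [hP i hi, sum_nonneg hratio]
  rw [rowCone_eq_rowKer_of_dual_pos hy hy0 hA, rowKer_eq_ker]
  calc nn.infDist u (LinearMap.ker T) ≤ CT * ‖T u‖ := hCT u
    _ ≤ CT * ((1 + R) * (Cm * nm (posPartOn B (A *ᵥ u)))) := by
        gcongr
        exact hTu.trans (mul_le_mul_of_nonneg_left (hCm _) hR0)
    _ = _ := by ring

end DualPositive

section Slater

variable {N : Finset ι} {xhat : κ → ℝ} (hN : ∀ i ∈ N, (A *ᵥ xhat) i < 0)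
include hN

theorem exists_infDist_rowCone_le_of_slater [Fintype ι] [DecidableEq ι]
    (nn : Seminorm ℝ (κ → ℝ)) {nm : Seminorm ℝ (ι → ℝ)} (hnm : ∀ v, nm v = 0 → v = 0) :
    ∃ C, ∀ u, nn.infDist u (A.rowCone N) ≤ C * nm (posPartOn N (A *ᵥ u)) := by
  obtain ⟨δ, hδ, hxhat⟩ := N.exists_pos_forall_le_neg hN
  obtain ⟨Cm, -, hCm⟩ := Seminorm.exists_norm_le_mul hnm
  refine ⟨nn xhat / δ * Cm, fun u => ?_⟩
  set P := ‖posPartOn N (A *ᵥ u)‖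
  have hz := add_smul_mem_rowCone (x := u) hδ (norm_nonneg _)
    (fun i hi => le_norm_posPartOn _ hi) hxhat
  calc nn.infDist u (A.rowCone N) ≤ nn (u - (u + (P / δ) • xhat)) := Seminorm.infDist_le hz
    _ = nn xhat / δ * P := by
        rw [sub_add_cancel_left, map_neg_eq_map, map_smul_eq_mul,
          Real.norm_of_nonneg (by positivity)]
        ring
    _ ≤ nn xhat / δ * (Cm * nm (posPartOn N (A *ᵥ u))) := by gcongr; exact hCm _
    _ = _ := by ring

theorem exists_infDist_inter_le [Fintype ι] {nn : Seminorm ℝ (κ → ℝ)}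
    (hnn : ∀ x, nn x = 0 → x = 0) {B : Finset ι} (hB : xhat ∈ A.rowKer B) :
    ∃ C, ∀ u, nn.infDist u (A.rowKer B ∩ A.rowCone N) ≤
      C * max (nn.infDist u (A.rowKer B)) (nn.infDist u (A.rowCone N)) := by
  obtain ⟨δ, hδ, hxhat⟩ := N.exists_pos_forall_le_neg hN
  obtain ⟨CA, hCA0, hCA⟩ := Seminorm.exists_norm_map_le_mul hnn A.mulVecLin
  refine ⟨1 + 2 * CA * nn xhat / δ, fun u => Seminorm.le_mul_max_infDist ⟨0, zero_mem_rowKer B⟩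
    ⟨0, zero_mem_rowCone N⟩ (by positivity) fun xL hxL xK hxK => ?_⟩
  set M := max (nn (u - xL)) (nn (u - xK))
  have hviol : ∀ i ∈ N, (A *ᵥ xL) i ≤ 2 * CA * M := fun i hi => calc
    (A *ᵥ xL) i ≤ (A *ᵥ (xL - xK)) i := by
        rw [mulVec_sub, Pi.sub_apply]
        linarith [hxK i hi]
    _ ≤ CA * nn (xL - xK) :=
        ((le_abs_self _).trans (norm_le_pi_norm (A *ᵥ (xL - xK)) i)).trans (hCA _)
    _ ≤ CA * (M + M) := by
        gcongr
        calc nn (xL - xK) = nn ((u - xK) - (u - xL)) := by rw [sub_sub_sub_cancel_left]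
          _ ≤ nn (u - xK) + nn (u - xL) := map_sub_le_add nn _ _
          _ ≤ M + M := add_le_add (le_max_right _ _) (le_max_left _ _)
    _ = 2 * CA * M := by ring
  have hz : xL + (2 * CA * M / δ) • xhat ∈ A.rowKer B ∩ A.rowCone N :=
    ⟨add_smul_mem_rowKer hxL hB _, add_smul_mem_rowCone hδ (by positivity) hviol hxhat⟩
  calc nn.infDist u (A.rowKer B ∩ A.rowCone N) ≤ nn (u - (xL + (2 * CA * M / δ) • xhat)) :=
        Seminorm.infDist_le hz
    _ ≤ nn (u - xL) + 2 * CA * M / δ * nn xhat := by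
        rw [← sub_sub]
        refine (map_sub_le_add nn _ _).trans_eq ?_
        rw [map_smul_eq_mul, Real.norm_of_nonneg (by positivity)]
    _ ≤ M + 2 * CA * M / δ * nn xhat := by gcongr; exact le_max_left _ _
    _ = (1 + 2 * CA * nn xhat / δ) * M := by ring

end Slater

end Matrix

/-- `Ĥ(L, K)` for the distance induced by `p`. -/
noncomputable def Seminorm.interHoffmanConst {E : Type*} [AddCommGroup E] [Module ℝ E]
    (p : Seminorm ℝ E) (L K : Set E) : ℝ :=
  sSup {r | ∃ u, u ∉ L ∩ K ∧ r = p.infDist u (L ∩ K) / max (p.infDist u L) (p.infDist u K)}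

/-- `H₀(A_I)`, where `ℝ^I` is normed by applying `nm` to vectors vanishing off `I`. -/
noncomputable def Matrix.hoffmanConstOn {ι κ : Type*} [Fintype κ] [DecidableEq ι]
    (nn : Seminorm ℝ (κ → ℝ)) (nm : Seminorm ℝ (ι → ℝ)) (A : Matrix ι κ ℝ) (I : Finset ι) :
    ℝ :=
  sSup {r | ∃ u, u ∉ A.rowCone I ∧ r = nn.infDist u (A.rowCone I) / nm (posPartOn I (A *ᵥ u))}

theorem Seminorm.interHoffmanConst_nonneg {E : Type*} [AddCommGroup E] [Module ℝ E]
    (p : Seminorm ℝ E) (L K : Set E) : 0 ≤ p.interHoffmanConst L K :=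
  sSup_div_nonneg (fun _ => infDist_nonneg) fun _ => le_max_of_le_left infDist_nonneg

theorem Matrix.hoffmanConstOn_nonneg {ι κ : Type*} [Fintype κ] [DecidableEq ι]
    (nn : Seminorm ℝ (κ → ℝ)) (nm : Seminorm ℝ (ι → ℝ)) (A : Matrix ι κ ℝ) (I : Finset ι) :
    0 ≤ A.hoffmanConstOn nn nm I :=
  sSup_div_nonneg (fun _ => Seminorm.infDist_nonneg) fun _ => apply_nonneg nm _

theorem Seminorm.infDist_inter_le_interHoffmanConst_mul {E : Type*} [AddCommGroup E]
    [Module ℝ E] {p : Seminorm ℝ E} {L K : Set E}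
    (h : ∃ C, ∀ u, p.infDist u (L ∩ K) ≤ C * max (p.infDist u L) (p.infDist u K)) (u : E) :
    p.infDist u (L ∩ K) ≤ p.interHoffmanConst L K * max (p.infDist u L) (p.infDist u K) := by
  obtain ⟨C, hC⟩ := h
  by_cases hu : u ∈ L ∩ K
  · rw [infDist_eq_zero_of_mem hu]
    exact mul_nonneg (p.interHoffmanConst_nonneg L K) (le_max_of_le_left infDist_nonneg)
  · exact le_sSup_div_mul (fun _ => le_max_of_le_left infDist_nonneg) (fun u _ => hC u) hu

theorem Matrix.infDist_div_le_hoffmanConstOn {ι κ : Type*} [Fintype κ] [DecidableEq ι]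
    {nn : Seminorm ℝ (κ → ℝ)} {nm : Seminorm ℝ (ι → ℝ)}
    (hcompat : ∀ y z : ι → ℝ, (∀ i, |y i| ≤ |z i|) → nm y ≤ nm z)
    {A : Matrix ι κ ℝ} {I : Finset ι}
    (h : ∃ C, ∀ u, nn.infDist u (A.rowCone I) ≤ C * nm (posPartOn I (A *ᵥ u))) (u : κ → ℝ) :
    nn.infDist u (A.rowCone I) / nm (fun i => max ((A *ᵥ u) i) 0) ≤ A.hoffmanConstOn nn nm I := by
  obtain ⟨C, hC⟩ := h
  have hH := A.hoffmanConstOn_nonneg nn nm I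
  refine div_le_of_le_mul₀ (apply_nonneg _ _) hH ?_
  calc nn.infDist u (A.rowCone I) ≤ A.hoffmanConstOn nn nm I * nm (posPartOn I (A *ᵥ u)) := by
        by_cases hu : u ∈ A.rowCone I
        · rw [Seminorm.infDist_eq_zero_of_mem hu]
          exact mul_nonneg hH (apply_nonneg _ _)
        · exact le_sSup_div_mul (fun _ => apply_nonneg _ _) (fun u _ => hC u) hu
    _ ≤ A.hoffmanConstOn nn nm I * nm (fun i => max ((A *ᵥ u) i) 0) :=
        mul_le_mul_of_nonneg_left (hcompat _ _ (abs_posPartOn_le I _)) hH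

open Classical in
theorem stmt14_general {m n : ℕ} (A : Matrix (Fin m) (Fin n) ℝ)
    (nn : Seminorm ℝ (Fin n → ℝ)) (nm : Seminorm ℝ (Fin m → ℝ))
    (hnn : ∀ x, nn x = 0 → x = 0) (hnm : ∀ y, nm y = 0 → y = 0)
    (hcompat : ∀ y z : Fin m → ℝ, (∀ i, |y i| ≤ |z i|) → nm y ≤ nm z)
    (B N : Finset (Fin m)) (hBN : B ∪ N = Finset.univ)
    (xhat : Fin n → ℝ) (hB : ∀ i ∈ B, A.mulVec xhat i = 0)
    (hN : ∀ i ∈ N, A.mulVec xhat i < 0)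
    (yhat : Fin m → ℝ) (hyhatpos : ∀ i ∈ B, 0 < yhat i)
    (hyhat0 : ∀ i ∉ B, yhat i = 0) (hyhat : A.transpose.mulVec yhat = 0) :
    {x : Fin n → ℝ | ∀ i, A.mulVec x i ≤ 0} =
      {x | ∀ i ∈ B, A.mulVec x i = 0} ∩ {x | ∀ i ∈ N, A.mulVec x i ≤ 0} ∧
    sSup {r | ∃ u : Fin n → ℝ, (¬ ∀ i, A.mulVec u i ≤ 0) ∧
        r = sInf {s | ∃ x, (∀ i, A.mulVec x i ≤ 0) ∧ s = nn (u - x)} /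
          nm (fun i => max (A.mulVec u i) 0)} ≤
      sSup {r | ∃ u : Fin n → ℝ,
          u ∉ {x | ∀ i ∈ B, A.mulVec x i = 0} ∩ {x | ∀ i ∈ N, A.mulVec x i ≤ 0} ∧
          r = sInf {s | ∃ w ∈ {x | ∀ i ∈ B, A.mulVec x i = 0} ∩
                {x | ∀ i ∈ N, A.mulVec x i ≤ 0}, s = nn (u - w)} /
            max (sInf {s | ∃ w ∈ {x | ∀ i ∈ B, A.mulVec x i = 0}, s = nn (u - w)})
                (sInf {s | ∃ w ∈ {x : Fin n → ℝ | ∀ i ∈ N, A.mulVec x i ≤ 0},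
                  s = nn (u - w)})} *
        max
          (sSup {r | ∃ u : Fin n → ℝ, (¬ ∀ i ∈ N, A.mulVec u i ≤ 0) ∧
            r = sInf {s | ∃ x, (∀ i ∈ N, A.mulVec x i ≤ 0) ∧ s = nn (u - x)} /
              nm (fun i => if i ∈ N then max (A.mulVec u i) 0 else 0)})
          (sSup {r | ∃ u : Fin n → ℝ, (¬ ∀ i ∈ B, A.mulVec u i ≤ 0) ∧
            r = sInf {s | ∃ x, (∀ i ∈ B, A.mulVec x i ≤ 0) ∧ s = nn (u - x)} /
              nm (fun i => if i ∈ B then max (A.mulVec u i) 0 else 0)}) := by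
  have hcone := A.setOf_mulVec_nonpos_eq hyhatpos hyhat0 hyhat hBN
  refine ⟨hcone, Real.sSup_le ?_ (mul_nonneg (nn.interHoffmanConst_nonneg _ _)
    (le_max_of_le_left (A.hoffmanConstOn_nonneg nn nm N)))⟩
  rintro _ ⟨u, -, rfl⟩
  change nn.infDist u {x | ∀ i, (A *ᵥ x) i ≤ 0} / nm (fun i => max ((A *ᵥ u) i) 0) ≤
    nn.interHoffmanConst (A.rowKer B) (A.rowCone N) *
      max (A.hoffmanConstOn nn nm N) (A.hoffmanConstOn nn nm B)
  have hLK := nn.infDist_inter_le_interHoffmanConst_mul (A.exists_infDist_inter_le hN hnn hB) u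
  have hK := infDist_div_le_hoffmanConstOn hcompat
    (A.exists_infDist_rowCone_le_of_slater hN nn hnm) u
  have hL := infDist_div_le_hoffmanConstOn hcompat
    (A.exists_infDist_rowCone_le_of_dual_pos hyhatpos hyhat0 hyhat nn hnm) u
  rw [A.rowCone_eq_rowKer_of_dual_pos hyhatpos hyhat0 hyhat] at hL
  rw [hcone]
  set ρ := nm (fun i => max ((A *ᵥ u) i) 0)
  set Ĥ := nn.interHoffmanConst (A.rowKer B) (A.rowCone N)
  have hρ : 0 ≤ ρ := apply_nonneg _ _
  calc _ ≤ Ĥ * max (nn.infDist u (A.rowKer B)) (nn.infDist u (A.rowCone N)) / ρ :=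
        div_le_div_of_nonneg_right hLK hρ
    _ = Ĥ * max (nn.infDist u (A.rowCone N) / ρ) (nn.infDist u (A.rowKer B) / ρ) := by
        rw [mul_div_assoc, max_div_div_right hρ, max_comm]
    _ ≤ _ := mul_le_mul_of_nonneg_left (max_le_max hK hL) (nn.interHoffmanConst_nonneg _ _)

open Classical in
/-- Theorem 1: for the Goldman–Tucker partition `B, N` of `A`, with
`L = {x : A_B x = 0}` and `K = {x : A_N x ≤ 0}`, one has
`{x : A x ≤ 0} = L ∩ K` and `H₀(A) ≤ Ĥ(L,K) ⬝ max{H₀(A_N), H₀(A_B)}`.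
The norm on `ℝⁿ` is a definite seminorm `nn`; the norm on `ℝᵐ` is a definite
seminorm `nm` satisfying componentwise compatibility, and the norms on
`ℝ^B`, `ℝ^N` are obtained by applying `nm` to vectors supported on `B`, `N`
(so that `‖w_B‖ ≤ ‖w‖` and `‖w_N‖ ≤ ‖w‖` hold automatically). -/
theorem stmt14 {m n : ℕ} (A : Matrix (Fin m) (Fin n) ℝ)
    (nn : Seminorm ℝ (Fin n → ℝ)) (nm : Seminorm ℝ (Fin m → ℝ))
    (hnn : ∀ x, nn x = 0 → x = 0) (hnm : ∀ y, nm y = 0 → y = 0)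
    (hcompat : ∀ y z : Fin m → ℝ, (∀ i, |y i| ≤ |z i|) → nm y ≤ nm z)
    (B N : Finset (Fin m)) (hBN : B ∪ N = Finset.univ) (hdisj : B ∩ N = ∅)
    (xhat : Fin n → ℝ) (hB : ∀ i ∈ B, A.mulVec xhat i = 0)
    (hN : ∀ i ∈ N, A.mulVec xhat i < 0)
    (yhat : Fin m → ℝ) (hyhatpos : ∀ i ∈ B, 0 < yhat i)
    (hyhat0 : ∀ i ∉ B, yhat i = 0) (hyhat : A.transpose.mulVec yhat = 0) :
    {x : Fin n → ℝ | ∀ i, A.mulVec x i ≤ 0} =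
      {x | ∀ i ∈ B, A.mulVec x i = 0} ∩ {x | ∀ i ∈ N, A.mulVec x i ≤ 0} ∧
    sSup {r | ∃ u : Fin n → ℝ, (¬ ∀ i, A.mulVec u i ≤ 0) ∧
        r = sInf {s | ∃ x, (∀ i, A.mulVec x i ≤ 0) ∧ s = nn (u - x)} /
          nm (fun i => max (A.mulVec u i) 0)} ≤
      sSup {r | ∃ u : Fin n → ℝ,
          u ∉ {x | ∀ i ∈ B, A.mulVec x i = 0} ∩ {x | ∀ i ∈ N, A.mulVec x i ≤ 0} ∧
          r = sInf {s | ∃ w ∈ {x | ∀ i ∈ B, A.mulVec x i = 0} ∩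
                {x | ∀ i ∈ N, A.mulVec x i ≤ 0}, s = nn (u - w)} /
            max (sInf {s | ∃ w ∈ {x | ∀ i ∈ B, A.mulVec x i = 0}, s = nn (u - w)})
                (sInf {s | ∃ w ∈ {x : Fin n → ℝ | ∀ i ∈ N, A.mulVec x i ≤ 0},
                  s = nn (u - w)})} *
        max
          (sSup {r | ∃ u : Fin n → ℝ, (¬ ∀ i ∈ N, A.mulVec u i ≤ 0) ∧
            r = sInf {s | ∃ x, (∀ i ∈ N, A.mulVec x i ≤ 0) ∧ s = nn (u - x)} /
              nm (fun i => if i ∈ N then max (A.mulVec u i) 0 else 0)})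
          (sSup {r | ∃ u : Fin n → ℝ, (¬ ∀ i ∈ B, A.mulVec u i ≤ 0) ∧
            r = sInf {s | ∃ x, (∀ i ∈ B, A.mulVec x i ≤ 0) ∧ s = nn (u - x)} /
              nm (fun i => if i ∈ B then max (A.mulVec u i) 0 else 0)}) :=
  stmt14_general A nn nm hnn hnm hcompat B N hBN xhat hB hN yhat hyhatpos hyhat0 hyhat
end
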